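/- arXiv:2602.00754 — 7 statements merged into one kernel-verified Lean document; each statement's English description precedes it below -/
import Mathlib

section
/- For every Boolean function f: {0,1}^n → {0,1}, the certificate complexity satisfies C(f) ≤ bs(f)·s(f). -/
open Finset

section Core
variable {ι : Type} [Fintype ι] [DecidableEq ι]

/-- Flip the bits of `x` indexed by the block `B`. -/
def flipSet (x : ι → Bool) (B : Finset ι) : ι → Bool :=
  fun i => if i ∈ B then !(x i) else x i

/-- Sensitivity of `f` at input `x`. -/
def sensAt (f : (ι → Bool) → Bool) (x : ι → Bool) : ℕ :=
  (univ.filter fun i => f (flipSet x {i}) ≠ f x).card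

/-- Sensitivity of `f`. -/
def sens (f : (ι → Bool) → Bool) : ℕ :=
  univ.sup fun x => sensAt f x

/-- Block sensitivity of `f` at `x`: the maximal number of pairwise disjoint
sensitive blocks at `x`. -/
noncomputable def bsAt (f : (ι → Bool) → Bool) (x : ι → Bool) : ℕ :=
  sSup {r | ∃ B : Fin r → Finset ι,
    (∀ j, f (flipSet x (B j)) ≠ f x) ∧
    ∀ j₁ j₂, j₁ ≠ j₂ → Disjoint (B j₁) (B j₂)}

/-- Block sensitivity of `f`. -/
noncomputable def blockSens (f : (ι → Bool) → Bool) : ℕ :=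
  univ.sup fun x => bsAt f x

/-- `S` is a certificate for `f` at `x`: every input agreeing with `x` on `S`
 has the same `f`-value as `x`. -/
def IsCert (f : (ι → Bool) → Bool) (x : ι → Bool) (S : Finset ι) : Prop :=
  ∀ y : ι → Bool, (∀ i ∈ S, y i = x i) → f y = f x

/-- Certificate complexity of `f` at `x`. -/
noncomputable def certAt (f : (ι → Bool) → Bool) (x : ι → Bool) : ℕ :=
  sInf {c | ∃ S : Finset ι, S.card = c ∧ IsCert f x S}

/-- Certificate complexity of `f`. -/
noncomputable def certC (f : (ι → Bool) → Bool) : ℕ :=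
  univ.sup fun x => certAt f x

/-- 0-certificate complexity of `f`. -/
noncomputable def cert0 (f : (ι → Bool) → Bool) : ℕ :=
  (univ.filter fun x => f x = false).sup fun x => certAt f x

/-- 1-certificate complexity of `f`. -/
noncomputable def cert1 (f : (ι → Bool) → Bool) : ℕ :=
  (univ.filter fun x => f x = true).sup fun x => certAt f x

/-- The restriction of `f` by the partial assignment `ρ` (a variable `i` with
`ρ i = none` is left unset; otherwise it is fixed to the given value). The
restricted function depends only on the unset variables. -/
def restrictBF (f : (ι → Bool) → Bool) (ρ : ι → Option Bool) : (ι → Bool) → Bool :=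
  fun x => f fun i => (ρ i).getD (x i)

/-- Number of unset variables of a partial assignment. -/
def unsetCard (ρ : ι → Option Bool) : ℕ :=
  (univ.filter fun i => ρ i = none).card

end Core

/-
Fix an input `x`. Take an inclusion-maximal family of pairwise disjoint minimal sensitive blocks
at `x`; its union `S` is a certificate at `x`, since an input agreeing with `x` on `S` but with a
different value would flip a sensitive block disjoint from `S`, and a minimal sensitive block inside
it could be added to the family. The family has at most `bs(f, x)` members, and each member `B`
has at most `s(f)` elements, because every bit of a minimal sensitive block `B` is sensitive at
`flipSet x B`. Hence `C(f, x) ≤ |S| ≤ bs(f, x) · s(f)`.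
-/

open Function

variable {ι : Type} [DecidableEq ι] {f : (ι → Bool) → Bool} {x : ι → Bool}

def IsSensitiveBlock (f : (ι → Bool) → Bool) (x : ι → Bool) (B : Finset ι) : Prop :=
  f (flipSet x B) ≠ f x

@[simp]
lemma flipSet_empty (x : ι → Bool) : flipSet x ∅ = x := by
  funext i
  simp [flipSet]

lemma flipSet_flipSet_singleton {B : Finset ι} {i : ι} (hi : i ∈ B) :
    flipSet (flipSet x B) {i} = flipSet x (B.erase i) := by
  funext j
  by_cases hj : j = i
  · subst hj
    simp [flipSet, hi]
  · simp [flipSet, hj]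

lemma IsSensitiveBlock.nonempty {B : Finset ι} (hB : IsSensitiveBlock f x B) : B.Nonempty := by
  rw [nonempty_iff_ne_empty]
  rintro rfl
  exact hB (by rw [flipSet_empty])

variable [Fintype ι]

lemma flipSet_filter_ne (x y : ι → Bool) : flipSet x {i | y i ≠ x i} = y := by
  funext i
  cases hx : x i <;> cases hy : y i <;> simp [flipSet, hx, hy]

lemma isCert_of_forall_isSensitiveBlock_not_disjoint {S : Finset ι}
    (hS : ∀ B, IsSensitiveBlock f x B → ¬Disjoint B S) : IsCert f x S := by
  intro y hy
  by_contra hfy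
  refine hS {i | y i ≠ x i} (by rwa [IsSensitiveBlock, flipSet_filter_ne]) ?_
  exact disjoint_left.mpr fun i hi hiS => (mem_filter.mp hi).2 (hy i hiS)

lemma Minimal.card_le_sens {B : Finset ι} (hB : Minimal (IsSensitiveBlock f x) B) :
    B.card ≤ sens f := by
  have hsens : B ⊆ univ.filter fun i => f (flipSet (flipSet x B) {i}) ≠ f (flipSet x B) := by
    intro i hi
    have hnot : ¬IsSensitiveBlock f x (B.erase i) :=
      hB.not_prop_of_lt (erase_ssubset hi)
    rw [IsSensitiveBlock, not_not] at hnot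
    rw [mem_filter, flipSet_flipSet_singleton hi, hnot]
    exact ⟨mem_univ i, Ne.symm hB.prop⟩
  calc B.card ≤ sensAt f (flipSet x B) := card_le_card hsens
    _ ≤ sens f := le_sup (mem_univ _)

lemma le_bsAt {r : ℕ} (B : Fin r → Finset ι) (hs : ∀ j, IsSensitiveBlock f x (B j))
    (hd : Pairwise (Disjoint on B)) : r ≤ bsAt f x := by
  refine le_csSup ⟨Fintype.card ι, ?_⟩ ⟨B, hs, hd⟩
  rintro r' ⟨B', hs', hd'⟩
  choose g hg using fun j => IsSensitiveBlock.nonempty (hs' j)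
  have hg_inj : Injective g := by
    intro j₁ j₂ h
    by_contra hne
    exact disjoint_left.mp (hd' j₁ j₂ hne) (hg j₁) (h ▸ hg j₂)
  simpa using Fintype.card_le_of_injective g hg_inj

lemma card_le_bsAt {F : Finset (Finset ι)} (hs : ∀ B ∈ F, IsSensitiveBlock f x B)
    (hd : (F : Set (Finset ι)).PairwiseDisjoint id) : F.card ≤ bsAt f x := by
  refine le_bsAt (fun j => F.equivFin.symm j) (fun j => hs _ (F.equivFin.symm j).2) ?_
  intro j₁ j₂ hne
  exact hd (F.equivFin.symm j₁).2 (F.equivFin.symm j₂).2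
    (Subtype.val_injective.ne (F.equivFin.symm.injective.ne hne))

def IsMinimalBlockPacking (f : (ι → Bool) → Bool) (x : ι → Bool) (F : Finset (Finset ι)) :
    Prop :=
  (∀ B ∈ F, Minimal (IsSensitiveBlock f x) B) ∧ (F : Set (Finset ι)).PairwiseDisjoint id

lemma isCert_biUnion_of_maximal {F : Finset (Finset ι)}
    (hF : Maximal (IsMinimalBlockPacking f x) F) : IsCert f x (F.biUnion id) := by
  refine isCert_of_forall_isSensitiveBlock_not_disjoint fun B hB hBS => ?_
  obtain ⟨B', hB'B, hB'⟩ := exists_minimal_le_of_wellFoundedLT _ B hB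
  have hB'S : Disjoint B' (F.biUnion id) := hBS.mono_left hB'B
  have hB'F : B' ∉ F := fun hmem =>
    hB'.prop.nonempty.ne_empty <|
      disjoint_self_iff_empty _ |>.mp (hB'S.mono_right (subset_biUnion_of_mem id hmem))
  have hpacking : IsMinimalBlockPacking f x (insert B' F) := by
    refine ⟨forall_mem_insert _ _ _ |>.mpr ⟨hB', hF.prop.1⟩, ?_⟩
    rw [coe_insert]
    exact hF.prop.2.insert_of_notMem hB'F fun C hC =>
      hB'S.mono_right (subset_biUnion_of_mem id hC)
  exact hB'F (hF.le_of_ge hpacking (subset_insert B' F) (mem_insert_self B' F))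

lemma certAt_le_bsAt_mul_sens (x : ι → Bool) : certAt f x ≤ bsAt f x * sens f := by
  obtain ⟨F, hF⟩ := exists_maximal_of_wellFoundedGT (IsMinimalBlockPacking f x)
    ⟨∅, by simp [IsMinimalBlockPacking]⟩
  calc certAt f x ≤ (F.biUnion id).card := Nat.sInf_le ⟨_, rfl, isCert_biUnion_of_maximal hF⟩
    _ ≤ F.card * sens f := card_biUnion_le_card_mul _ _ _ fun B hB => (hF.prop.1 B hB).card_le_sens
    _ ≤ bsAt f x * sens f :=
      Nat.mul_le_mul_right _ (card_le_bsAt (fun B hB => (hF.prop.1 B hB).prop) hF.prop.2)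

/-- `C(f) ≤ bs(f) · s(f)`. -/
theorem certC_le_blockSens_mul_sens
    {n : ℕ} (f : (Fin n → Bool) → Bool) :
    certC f ≤ blockSens f * sens f :=
  Finset.sup_le fun x _ => (certAt_le_bsAt_mul_sens x).trans
    (Nat.mul_le_mul_right _ (le_sup (mem_univ x)))
end

section
/- Let g: {0,1}^k → {0,1} (with k a perfect square) be the function that equals 1 if and only if the input consists of exactly √k consecutive ones and zeroes elsewhere. Then the 1-certificate complexity of g equals k. -/
open Finset

/-- The function on `{0,1}^{m²}` that is `1` iff the input consists of exactly
`m = √(m²)` consecutive ones and zeroes elsewhere. -/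
def consecOnes (m : ℕ) : (Fin (m ^ 2) → Bool) → Bool :=
  fun y => decide (∃ s : Fin (m ^ 2 + 1), (s : ℕ) + m ≤ m ^ 2 ∧
    ∀ j : Fin (m ^ 2), (y j = true ↔ (s : ℕ) ≤ (j : ℕ) ∧ (j : ℕ) < (s : ℕ) + m))

/-!
A `1`-input of `consecOnes m` has exactly `m` ones, while flipping a single bit changes the
number of ones. Hence every `1`-input is sensitive to each of the `m²` variables, and a
certificate for it must fix all of them.
-/

section Certificates
variable {ι : Type}

lemma isCert_univ [Fintype ι] (f : (ι → Bool) → Bool) (x : ι → Bool) : IsCert f x univ :=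
  fun _ hy => congrArg f (funext fun i => hy i (mem_univ i))

lemma certAt_le_card [Fintype ι] (f : (ι → Bool) → Bool) (x : ι → Bool) :
    certAt f x ≤ Fintype.card ι :=
  Nat.sInf_le ⟨univ, card_univ, isCert_univ f x⟩

lemma cert1_le_card [Fintype ι] [DecidableEq ι] (f : (ι → Bool) → Bool) :
    cert1 f ≤ Fintype.card ι :=
  Finset.sup_le fun x _ => certAt_le_card f x

lemma certAt_le_cert1 [Fintype ι] [DecidableEq ι] {f : (ι → Bool) → Bool} {x : ι → Bool}
    (hx : f x = true) :
    certAt f x ≤ cert1 f :=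
  Finset.le_sup (f := fun x => certAt f x) (mem_filter.mpr ⟨mem_univ x, hx⟩)

lemma IsCert.mem_of_flipSet_ne [DecidableEq ι] {f : (ι → Bool) → Bool} {x : ι → Bool}
    {S : Finset ι} (hS : IsCert f x S) {i : ι} (hi : f (flipSet x {i}) ≠ f x) : i ∈ S := by
  by_contra hiS
  refine hi (hS _ fun j hj => ?_)
  have hji : j ≠ i := fun h => hiS (h ▸ hj)
  simp [flipSet, hji]

lemma certAt_eq_card_of_forall_flipSet_ne [Fintype ι] [DecidableEq ι]
    {f : (ι → Bool) → Bool} {x : ι → Bool}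
    (hx : ∀ i, f (flipSet x {i}) ≠ f x) : certAt f x = Fintype.card ι := by
  refine le_antisymm (certAt_le_card f x) ?_
  obtain ⟨S, hcard, hS⟩ : certAt f x ∈ {c | ∃ S : Finset ι, S.card = c ∧ IsCert f x S} :=
    Nat.sInf_mem ⟨_, univ, rfl, isCert_univ f x⟩
  rw [← hcard, ← card_univ]
  exact card_le_card fun i _ => hS.mem_of_flipSet_ne (hx i)

def hammingWeight [Fintype ι] (x : ι → Bool) : ℕ :=
  ∑ i, (x i).toNat

lemma hammingWeight_flipSet_singleton_ne [Fintype ι] [DecidableEq ι] (x : ι → Bool) (i : ι) :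
    hammingWeight (flipSet x {i}) ≠ hammingWeight x := by
  have hrest : ∑ j ∈ {i}ᶜ, (flipSet x {i} j).toNat = ∑ j ∈ {i}ᶜ, (x j).toNat :=
    sum_congr rfl fun j hj => by simp_all [flipSet]
  rw [hammingWeight, hammingWeight, Fintype.sum_eq_add_sum_compl i,
    Fintype.sum_eq_add_sum_compl i (x · |>.toNat), hrest]
  cases hxi : x i <;> simp [flipSet, hxi]

lemma certAt_eq_card_of_hammingWeight_eq [Fintype ι] [DecidableEq ι]
    {f : (ι → Bool) → Bool} {w : ℕ}
    (hf : ∀ y, f y = true → hammingWeight y = w) {x : ι → Bool} (hx : f x = true) :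
    certAt f x = Fintype.card ι := by
  refine certAt_eq_card_of_forall_flipSet_ne fun i hflip => ?_
  exact hammingWeight_flipSet_singleton_ne x i <| by rw [hf _ (hflip.trans hx), hf x hx]

end Certificates

lemma consecOnes_initialSegment (m : ℕ) :
    consecOnes m (fun j => decide ((j : ℕ) < m)) = true := by
  rw [consecOnes, decide_eq_true_eq]
  refine ⟨⟨0, by omega⟩, ?_, fun j => ?_⟩
  · simpa using Nat.le_self_pow two_ne_zero m
  · simp

lemma hammingWeight_of_consecOnes {m : ℕ} {y : Fin (m ^ 2) → Bool}
    (hy : consecOnes m y = true) :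
    hammingWeight y = m := by
  obtain ⟨s, hs, hblock⟩ := of_decide_eq_true hy
  have hrange :
      (range (m ^ 2)).filter (fun j => (s : ℕ) ≤ j ∧ j < s + m) = Ico (s : ℕ) (s + m) := by
    ext j; simp only [mem_filter, mem_range, mem_Ico]; omega
  calc hammingWeight y
      = ∑ j : Fin (m ^ 2), if (s : ℕ) ≤ j ∧ (j : ℕ) < s + m then 1 else 0 :=
        sum_congr rfl fun j _ => by simp only [← hblock j]; cases y j <;> rfl
    _ = ∑ j ∈ range (m ^ 2), if (s : ℕ) ≤ j ∧ j < s + m then 1 else 0 :=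
        Fin.sum_univ_eq_sum_range (fun j => if (s : ℕ) ≤ j ∧ j < s + m then 1 else 0) _
    _ = m := by rw [sum_boole, hrange]; simp

/-- the 1-certificate complexity of `consecOnes` on `k = m²`
variables equals `k`. -/
theorem cert1_consecOnes (m : ℕ) :
    cert1 (consecOnes m) = m ^ 2 := by
  refine le_antisymm ((cert1_le_card _).trans_eq (Fintype.card_fin _)) ?_
  have hinit := consecOnes_initialSegment m
  calc m ^ 2 = certAt (consecOnes m) (fun j => decide ((j : ℕ) < m)) := by
        rw [certAt_eq_card_of_hammingWeight_eq (fun _ => hammingWeight_of_consecOnes) hinit,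
          Fintype.card_fin]
    _ ≤ cert1 (consecOnes m) := certAt_le_cert1 hinit
end

section
/- Let g: {0,1}^k → {0,1} (k a perfect square) equal 1 iff the input consists of exactly √k consecutive ones and zeroes elsewhere, and let f = OR_k ∘ g: {0,1}^{k^2} → {0,1} (the OR of k independent copies of g). Then the block sensitivity of f at the all-zeros input is exactly k·√k. -/
open Finset

/-- The modified Rubinstein function: `OR` of `m²` independent copies of
`consecOnes m`, a function on `(m²)² = m⁴` variables. -/
def modRub (m : ℕ) : (Fin (m ^ 2) × Fin (m ^ 2) → Bool) → Bool :=
  fun x => decide (∃ i : Fin (m ^ 2), consecOnes m (fun j => x (i, j)) = true)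

lemma window_eq {m t1 t2 v : ℕ} (h1 : t1 * m ≤ v) (h2 : v < t1 * m + m)
    (h3 : t2 * m ≤ v) (h4 : v < t2 * m + m) : t1 = t2 := by
  rcases lt_trichotomy t1 t2 with h | h | h
  · have : (t1 + 1) * m ≤ t2 * m := Nat.mul_le_mul_right m h
    simp [Nat.add_mul] at this; omega
  · exact h
  · have : (t2 + 1) * m ≤ t1 * m := Nat.mul_le_mul_right m h
    simp [Nat.add_mul] at this; omega

lemma modRub_zero_eq (m : ℕ) : modRub m (fun _ => false) = false := by
  simp only [modRub, decide_eq_false_iff_not]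
  rintro ⟨i, hi⟩
  rcases Nat.eq_zero_or_pos m with h0 | hm
  · subst h0; exact absurd i.isLt (by simp)
  · simp only [consecOnes, decide_eq_true_iff] at hi
    obtain ⟨s, hs, hall⟩ := hi
    have hslt : (s : ℕ) < m ^ 2 := by omega
    have := (hall ⟨s, hslt⟩).mpr (by simp only [Fin.val_mk]; omega)
    simp at this

lemma bs_ub (m : ℕ) (hm : 0 < m) (r : ℕ)
    (hr : r ∈ {r | ∃ B : Fin r → Finset (Fin (m ^ 2) × Fin (m ^ 2)),
      (∀ j, modRub m (flipSet (fun _ => false) (B j)) ≠ modRub m (fun _ => false)) ∧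
      ∀ j₁ j₂, j₁ ≠ j₂ → Disjoint (B j₁) (B j₂)}) : r ≤ m ^ 2 * m := by
  obtain ⟨B, hB, hdisj⟩ := hr
  have hcard : ∀ j, m ≤ (B j).card := by
    intro j
    have h1 : modRub m (flipSet (fun _ => false) (B j)) = true := by
      have := hB j; rw [modRub_zero_eq] at this; simpa using this
    simp only [modRub, decide_eq_true_iff] at h1
    obtain ⟨i, hi⟩ := h1
    simp only [consecOnes, decide_eq_true_iff] at hi
    obtain ⟨s, hs, hall⟩ := hi
    have hmem : ∀ u : Fin m, ((i, ⟨(s : ℕ) + u, by omega⟩) : Fin (m ^ 2) × Fin (m ^ 2)) ∈ B j := by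
      intro u
      have := (hall ⟨(s : ℕ) + u, by omega⟩).mpr
        (by simp only [Fin.val_mk]; have := u.isLt; omega)
      simpa [flipSet] using this
    have hinj : Set.InjOn
        (fun u : Fin m => ((i, ⟨(s : ℕ) + u, by omega⟩) : Fin (m ^ 2) × Fin (m ^ 2)))
        ((univ : Finset (Fin m)) : Set (Fin m)) := by
      intro a _ b _ hab
      simp only [Prod.mk.injEq, Fin.mk.injEq] at hab
      exact Fin.ext (by omega)
    have := Finset.card_le_card_of_injOn
      (fun u : Fin m => ((i, ⟨(s : ℕ) + u, by omega⟩) : Fin (m ^ 2) × Fin (m ^ 2)))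
      (fun u _ => hmem u) hinj
    simpa using this
  have hsum : (univ : Finset (Fin r)).card • m ≤ ∑ j : Fin r, (B j).card :=
    Finset.card_nsmul_le_sum _ _ _ (fun j _ => hcard j)
  have hbu : ∑ j : Fin r, (B j).card = ((univ : Finset (Fin r)).biUnion B).card :=
    (Finset.card_biUnion (fun a _ b _ hab => hdisj a b hab)).symm
  have hle : ((univ : Finset (Fin r)).biUnion B).card ≤ m ^ 2 * m ^ 2 := by
    calc ((univ : Finset (Fin r)).biUnion B).card
        ≤ (univ : Finset (Fin (m ^ 2) × Fin (m ^ 2))).card := Finset.card_le_card (subset_univ _)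
      _ = m ^ 2 * m ^ 2 := by simp
  have : r * m ≤ (m ^ 2 * m) * m := by
    have := hsum.trans (hbu.le.trans hle)
    simpa [smul_eq_mul, mul_assoc, pow_succ, pow_two, mul_comm, mul_left_comm] using this
  exact Nat.le_of_mul_le_mul_right this hm

theorem bsAt_modRub_zero' (m : ℕ) :
    bsAt (modRub m) (fun _ => false) = m ^ 2 * m := by
  rcases Nat.eq_zero_or_pos m with h0 | hm
  · subst h0
    simp only [pow_succ, Nat.mul_zero, Nat.zero_mul]
    apply le_antisymm _ (Nat.zero_le _)
    apply csSup_le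
    · exact ⟨0, fun j => j.elim0, fun j => j.elim0, fun j₁ => j₁.elim0⟩
    · rintro r ⟨B, hB, -⟩
      by_contra hr
      have hj : flipSet (fun _ : Fin (0 ^ 2) × Fin (0 ^ 2) => false) (B ⟨0, by omega⟩)
          = (fun _ => false) := by
        funext p; exact absurd p.1.isLt (by simp)
      exact hB ⟨0, by omega⟩ (by rw [hj])
  · apply le_antisymm
    · apply csSup_le
      · exact ⟨0, fun j => j.elim0, fun j => j.elim0, fun j₁ => j₁.elim0⟩
      · exact fun r hr => bs_ub m hm r hr
    · apply le_csSup ⟨m ^ 2 * m, fun r hr => bs_ub m hm r hr⟩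
      refine ⟨fun j => univ.filter (fun p => (p.1 : ℕ) = (j : ℕ) / m ∧
        ((j : ℕ) % m) * m ≤ (p.2 : ℕ) ∧ (p.2 : ℕ) < ((j : ℕ) % m) * m + m), ?_, ?_⟩
      · intro j
        rw [modRub_zero_eq]
        have hwin : ((j : ℕ) % m) * m + m ≤ m ^ 2 := by
          have h1 : (j : ℕ) % m + 1 ≤ m := Nat.mod_lt _ hm
          calc ((j : ℕ) % m) * m + m = ((j : ℕ) % m + 1) * m := by ring
            _ ≤ m * m := Nat.mul_le_mul_right m h1
            _ = m ^ 2 := (sq m).symm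
        have hdiv : (j : ℕ) / m < m ^ 2 := by
          rw [Nat.div_lt_iff_lt_mul hm]; exact j.isLt
        simp only [modRub, ne_eq, decide_eq_false_iff_not, not_not, not_forall]
        refine ⟨⟨(j : ℕ) / m, hdiv⟩, ?_⟩
        simp only [consecOnes, decide_eq_true_iff]
        refine ⟨⟨((j : ℕ) % m) * m, by omega⟩, by simpa using hwin, ?_⟩
        intro q
        simp [flipSet]
      · intro j₁ j₂ hne
        rw [Finset.disjoint_left]
        intro p hp1 hp2
        simp only [Finset.mem_filter, Finset.mem_univ, true_and] at hp1 hp2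
        obtain ⟨hd1, hl1, hr1⟩ := hp1
        obtain ⟨hd2, hl2, hr2⟩ := hp2
        have hdd : (j₁ : ℕ) / m = (j₂ : ℕ) / m := by omega
        have hmm : (j₁ : ℕ) % m = (j₂ : ℕ) % m := window_eq hl1 hr1 hl2 hr2
        exact hne (Fin.ext (by
          rw [← Nat.div_add_mod (j₁ : ℕ) m, ← Nat.div_add_mod (j₂ : ℕ) m, hdd, hmm]))

/-- the block sensitivity of `f = OR_k ∘ g` (`k = m²`,
`g = consecOnes m`) at the all-zeros input is exactly `k·√k = m³`. -/
theorem bsAt_modRub_zero (m : ℕ) :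
    bsAt (modRub m) (fun _ => false) = m ^ 2 * m := by
  exact bsAt_modRub_zero' m
end

section
/- Let g: {0,1}^k → {0,1} (k a perfect square) equal 1 iff the input consists of exactly √k consecutive ones and zeroes elsewhere. If a partial assignment ρ to the inputs of g sets some variable to 1 and g restricted by ρ is not identically 0, then every 0-input of the restricted function g|_ρ has a 0-certificate of size at most 3. -/
open Finset

lemma certAt_le_three_of_cert {ι : Type} [Fintype ι] [DecidableEq ι]
    (f : (ι → Bool) → Bool) (x : ι → Bool) (S : Finset ι)
    (h : IsCert f x S) (hc : S.card ≤ 3) : certAt f x ≤ 3 :=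
  le_trans (Nat.sInf_le ⟨S, rfl, h⟩) hc

/-- if a partial assignment `ρ` sets some variable of
`g = consecOnes m` to `1` and `g|_ρ` is not identically `0`, then every
0-input of `g|_ρ` has a 0-certificate of size at most `3`. -/
theorem cert_restricted_consecOnes_le_three (m : ℕ)
    (ρ : Fin (m ^ 2) → Option Bool)
    (hone : ∃ i, ρ i = some true)
    (hnonzero : ∃ x, restrictBF (consecOnes m) ρ x = true) :
    ∀ x, restrictBF (consecOnes m) ρ x = false →
      certAt (restrictBF (consecOnes m) ρ) x ≤ 3 := by
  classical
  obtain ⟨i₀, hi₀⟩ := hone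
  intro x hx
  set z : Fin (m ^ 2) → Bool := fun i => (ρ i).getD (x i) with hzdef
  have hz0 : ¬ ∃ s : Fin (m ^ 2 + 1), (s : ℕ) + m ≤ m ^ 2 ∧
      ∀ j : Fin (m ^ 2), (z j = true ↔ (s : ℕ) ≤ (j : ℕ) ∧ (j : ℕ) < (s : ℕ) + m) := by
    have h := hx
    unfold restrictBF consecOnes at h
    exact of_decide_eq_false h
  have hzi₀ : z i₀ = true := by simp [hzdef, hi₀]
  -- general certificate lemma
  have main : ∀ S : Finset (Fin (m ^ 2)),
      (∀ w : Fin (m ^ 2) → Bool, (∀ j ∈ S, w j = z j) → w i₀ = true →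
        ¬ ∃ s : Fin (m ^ 2 + 1), (s : ℕ) + m ≤ m ^ 2 ∧
          ∀ j : Fin (m ^ 2), (w j = true ↔ (s : ℕ) ≤ (j : ℕ) ∧ (j : ℕ) < (s : ℕ) + m)) →
      IsCert (restrictBF (consecOnes m) ρ) x S := by
    intro S hS y hy
    rw [hx]
    unfold restrictBF consecOnes
    apply decide_eq_false
    apply hS
    · intro j hj
      have hyj := hy j hj
      cases hρ : ρ j <;> simp [hzdef, hρ, hyj]
    · simp [hi₀]
  by_cases hA : ∃ p q : Fin (m ^ 2), z p = true ∧ z q = true ∧ (p : ℕ) + m ≤ (q : ℕ)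
  · obtain ⟨p, q, hp, hq, hpq⟩ := hA
    apply certAt_le_three_of_cert _ _ ({p, q} : Finset (Fin (m ^ 2)))
    · apply main
      rintro w hw - ⟨s, hs, hwin⟩
      have hwp : w p = true := by rw [hw p (by simp), hp]
      have hwq : w q = true := by rw [hw q (by simp), hq]
      have h1 := (hwin p).mp hwp
      have h2 := (hwin q).mp hwq
      omega
    · exact le_trans (Finset.card_insert_le _ _) (by simp)
  by_cases hB : ∃ p q r : Fin (m ^ 2), (p : ℕ) < (q : ℕ) ∧ (q : ℕ) < (r : ℕ) ∧
      z p = true ∧ z q = false ∧ z r = true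
  · obtain ⟨p, q, r, hpq, hqr, hp, hq, hr⟩ := hB
    apply certAt_le_three_of_cert _ _ ({p, q, r} : Finset (Fin (m ^ 2)))
    · apply main
      rintro w hw - ⟨s, hs, hwin⟩
      have hwp : w p = true := by rw [hw p (by simp), hp]
      have hwq : w q = false := by rw [hw q (by simp), hq]
      have hwr : w r = true := by rw [hw r (by simp), hr]
      have h1 := (hwin p).mp hwp
      have h3 := (hwin r).mp hwr
      have h2 : ¬ ((s : ℕ) ≤ (q : ℕ) ∧ (q : ℕ) < (s : ℕ) + m) := by
        intro hc
        rw [(hwin q).mpr hc] at hwq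
        exact Bool.noConfusion hwq
      omega
    · have h1 := Finset.card_insert_le p ({q, r} : Finset (Fin (m ^ 2)))
      have h2 := Finset.card_insert_le q ({r} : Finset (Fin (m ^ 2)))
      have h3 : ({r} : Finset (Fin (m ^ 2))).card = 1 := Finset.card_singleton r
      omega
  -- case C : the ones of z form a contiguous run of length < m
  set T : Finset (Fin (m ^ 2)) := Finset.univ.filter (fun i => z i = true) with hTdef
  have hmemT : ∀ j, j ∈ T ↔ z j = true := by intro j; simp [hTdef]
  have hT : T.Nonempty := ⟨i₀, (hmemT i₀).mpr hzi₀⟩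
  set a : Fin (m ^ 2) := T.min' hT with hadef
  set b : Fin (m ^ 2) := T.max' hT with hbdef
  have hza : z a = true := (hmemT a).mp (T.min'_mem hT)
  have hzb : z b = true := (hmemT b).mp (T.max'_mem hT)
  have hle : ∀ j, z j = true → (a : ℕ) ≤ (j : ℕ) ∧ (j : ℕ) ≤ (b : ℕ) := by
    intro j hj
    have h1 := T.min'_le j ((hmemT j).mpr hj)
    have h2 := T.le_max' j ((hmemT j).mpr hj)
    exact ⟨h1, h2⟩
  -- all positions between a and b are ones
  have hrun : ∀ j : Fin (m ^ 2), (a : ℕ) ≤ (j : ℕ) → (j : ℕ) ≤ (b : ℕ) → z j = true := by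
    intro j hja hjb
    by_contra hzj
    have hzj' : z j = false := by
      cases h : z j
      · rfl
      · exact absurd h hzj
    have hja' : (a : ℕ) < (j : ℕ) := by
      rcases Nat.lt_or_ge (a : ℕ) (j : ℕ) with h | h
      · exact h
      · exfalso; have : a = j := Fin.ext (by omega); rw [← this, hza] at hzj'; exact Bool.noConfusion hzj'
    have hjb' : (j : ℕ) < (b : ℕ) := by
      rcases Nat.lt_or_ge (j : ℕ) (b : ℕ) with h | h
      · exact h
      · exfalso; have : j = b := Fin.ext (by omega); rw [this, hzb] at hzj'; exact Bool.noConfusion hzj'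
    exact hB ⟨a, j, b, hja', hjb', hza, hzj', hzb⟩
  -- the run has length < m
  have hlen : (b : ℕ) < (a : ℕ) + m := by
    by_contra h
    exact hA ⟨a, b, hza, hzb, by omega⟩
  have hlen' : (b : ℕ) + 1 < (a : ℕ) + m := by
    rcases Nat.lt_or_ge ((b : ℕ) + 1) ((a : ℕ) + m) with h | h
    · exact h
    · exfalso
      have hba : (b : ℕ) + 1 = (a : ℕ) + m := by omega
      apply hz0
      refine ⟨⟨(a : ℕ), by omega⟩, by simp; omega, ?_⟩
      intro j
      simp only
      constructor
      · intro hj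
        have := hle j hj
        omega
      · intro hj
        exact hrun j (by omega) (by omega)
  -- certificate positions (with i₀ as harmless dummy)
  have hi₀T : (a : ℕ) ≤ (i₀ : ℕ) ∧ (i₀ : ℕ) ≤ (b : ℕ) := hle i₀ hzi₀
  set pa : Fin (m ^ 2) := if h : 0 < (a : ℕ) then ⟨(a : ℕ) - 1, by omega⟩ else i₀ with hpadef
  set pb : Fin (m ^ 2) := if h : (b : ℕ) + 1 < m ^ 2 then ⟨(b : ℕ) + 1, h⟩ else i₀ with hpbdef
  apply certAt_le_three_of_cert _ _ ({pa, pb} : Finset (Fin (m ^ 2)))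
  · apply main
    rintro w hw hwi₀ ⟨s, hs, hwin⟩
    have hi₀win := (hwin i₀).mp hwi₀
    have hsa : (a : ℕ) ≤ (s : ℕ) := by
      by_cases h : 0 < (a : ℕ)
      · have hpa : pa = ⟨(a : ℕ) - 1, by omega⟩ := by rw [hpadef, dif_pos h]
        have hzpa : z pa = false := by
          cases hc : z pa
          · rfl
          · exfalso
            have := (hle pa hc).1
            rw [hpa] at this
            simp at this
            omega
        have hwpa : w pa = false := by rw [hw pa (by simp), hzpa]
        have hnot : ¬ ((s : ℕ) ≤ (pa : ℕ) ∧ (pa : ℕ) < (s : ℕ) + m) := by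
          intro hc
          rw [(hwin pa).mpr hc] at hwpa
          exact Bool.noConfusion hwpa
        rw [hpa] at hnot
        simp at hnot
        omega
      · omega
    have hsb : (s : ℕ) + m ≤ (b : ℕ) + 1 := by
      by_cases h : (b : ℕ) + 1 < m ^ 2
      · have hpb : pb = ⟨(b : ℕ) + 1, h⟩ := by rw [hpbdef, dif_pos h]
        have hzpb : z pb = false := by
          cases hc : z pb
          · rfl
          · exfalso
            have := (hle pb hc).2
            rw [hpb] at this
            simp at this
        have hwpb : w pb = false := by rw [hw pb (by simp), hzpb]
        have hnot : ¬ ((s : ℕ) ≤ (pb : ℕ) ∧ (pb : ℕ) < (s : ℕ) + m) := by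
          intro hc
          rw [(hwin pb).mpr hc] at hwpb
          exact Bool.noConfusion hwpb
        rw [hpb] at hnot
        simp at hnot
        omega
      · omega
    omega
  · exact le_trans (Finset.card_insert_le _ _) (by simp)
end

section
/- Let g: {0,1}^k → {0,1} (k a perfect square) equal 1 iff the input consists of exactly √k consecutive ones and zeroes elsewhere. Let ρ be a partial assignment that sets each fixed variable to 0 and leaves η variables unset. Then the all-zeros input of g|_ρ has a 0-certificate of size at most ⌈η/√k⌉, i.e. C(g|_ρ, 0^η) ≤ ⌈η/√k⌉. -/
open Finset

namespace CertAux

lemma certAt_le_of_cert {ι : Type} [Fintype ι] [DecidableEq ι]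
    (f : (ι → Bool) → Bool) (x : ι → Bool) (S : Finset ι) (h : IsCert f x S) :
    certAt f x ≤ S.card :=
  Nat.sInf_le ⟨S, rfl, h⟩

variable {m : ℕ} (ρ : Fin (m ^ 2) → Option Bool)

/-- Unset positions. -/
def U : Finset (Fin (m ^ 2)) := univ.filter fun i => ρ i = none

/-- Number of unset positions below `a`. -/
def rnk (a : ℕ) : ℕ := ((U ρ).filter fun q : Fin (m ^ 2) => (q : ℕ) < a).card

lemma rnk_lt_of_mem {p : Fin (m ^ 2)} (hp : p ∈ U ρ) : rnk ρ p < (U ρ).card := by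
  apply Finset.card_lt_card
  refine (Finset.ssubset_iff_of_subset (filter_subset _ _)).mpr ⟨p, hp, ?_⟩
  simp

lemma rnk_lt_rnk {p : Fin (m ^ 2)} {a : ℕ} (hp : p ∈ U ρ) (h : (p : ℕ) < a) :
    rnk ρ p < rnk ρ a := by
  apply Finset.card_lt_card
  have hsub : (U ρ).filter (fun q : Fin (m ^ 2) => (q : ℕ) < (p : ℕ)) ⊆
      (U ρ).filter (fun q : Fin (m ^ 2) => (q : ℕ) < a) :=
    Finset.monotone_filter_right _ (fun x _ hx => hx.trans h)
  exact (Finset.ssubset_iff_of_subset hsub).mpr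
    ⟨p, Finset.mem_filter.mpr ⟨hp, h⟩, by simp⟩

lemma rnk_inj {p p' : Fin (m ^ 2)} (hp : p ∈ U ρ) (hp' : p' ∈ U ρ)
    (h : rnk ρ p = rnk ρ p') : p = p' := by
  rcases lt_trichotomy (p : ℕ) (p' : ℕ) with hlt | heq | hlt
  · exact absurd h (Nat.ne_of_lt (rnk_lt_rnk ρ hp hlt))
  · exact Fin.ext heq
  · exact absurd h.symm (Nat.ne_of_lt (rnk_lt_rnk ρ hp' hlt))

lemma rnk_succ {a : ℕ} (ha : a < m ^ 2) (hU : (⟨a, ha⟩ : Fin (m ^ 2)) ∈ U ρ) :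
    rnk ρ (a + 1) = rnk ρ a + 1 := by
  have hset : (U ρ).filter (fun q : Fin (m ^ 2) => (q : ℕ) < a + 1) =
      insert ⟨a, ha⟩ ((U ρ).filter fun q : Fin (m ^ 2) => (q : ℕ) < a) := by
    ext q
    simp only [Finset.mem_filter, Finset.mem_insert]
    constructor
    · rintro ⟨hq, hlt⟩
      rcases Nat.lt_succ_iff_lt_or_eq.mp hlt with h | h
      · exact Or.inr ⟨hq, h⟩
      · exact Or.inl (Fin.ext h)
    · rintro (rfl | ⟨hq, hlt⟩)
      · exact ⟨hU, Nat.lt_succ_self a⟩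
      · exact ⟨hq, hlt.trans (Nat.lt_succ_self a)⟩
  rw [rnk, hset, Finset.card_insert_of_notMem (by simp), rnk]

lemma rnk_add {s : ℕ} (t : ℕ) (hst : s + t ≤ m ^ 2)
    (hU : ∀ j : Fin (m ^ 2), s ≤ (j : ℕ) → (j : ℕ) < s + t → j ∈ U ρ) :
    rnk ρ (s + t) = rnk ρ s + t := by
  induction t with
  | zero => rfl
  | succ t ih =>
    have h1 : s + t < m ^ 2 := by omega
    have h2 : (⟨s + t, h1⟩ : Fin (m ^ 2)) ∈ U ρ :=
      hU ⟨s + t, h1⟩ (by show s ≤ s + t; omega) (by show s + t < s + (t + 1); omega)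
    have : rnk ρ (s + t + 1) = rnk ρ (s + t) + 1 := rnk_succ ρ h1 h2
    rw [show s + (t + 1) = s + t + 1 by ring, this,
      ih (by omega) (fun j hj1 hj2 => hU j hj1 (by omega))]
    ring

end CertAux

open CertAux in
/-- if `ρ` sets every fixed variable of `g = consecOnes m` to `0`
and leaves `η` variables unset, then the all-zeros input of `g|_ρ` has a
0-certificate of size at most `⌈η/√k⌉ = ⌈η/m⌉`. -/
theorem cert_allZeros_restricted_consecOnes (m : ℕ)
    (ρ : Fin (m ^ 2) → Option Bool)
    (hρ : ∀ i, ρ i = some false ∨ ρ i = none) :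
    certAt (restrictBF (consecOnes m) ρ) (fun _ => false) ≤
      (unsetCard ρ + m - 1) / m := by
  classical
  rcases Nat.eq_zero_or_pos m with hm | hm
  · -- m = 0 : the function is constant, the empty set is a certificate
    subst hm
    have hconst : ∀ y, restrictBF (consecOnes 0) ρ y = true := by
      intro y
      simp only [restrictBF, consecOnes, decide_eq_true_eq]
      exact ⟨⟨0, Nat.succ_pos _⟩, by simp, fun j => absurd j.isLt (by simp)⟩
    have hcert : IsCert (restrictBF (consecOnes 0) ρ) (fun _ => false) (∅ : Finset (Fin (0 ^ 2))) := by
      intro y _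
      rw [hconst, hconst]
    exact le_trans (certAt_le_of_cert _ _ _ hcert) (by simp)
  · -- m ≥ 1
    set η := unsetCard ρ with hη
    have hηU : (U ρ).card = η := rfl
    -- the certificate: unset positions whose rank is divisible by m
    set S : Finset (Fin (m ^ 2)) := (U ρ).filter (fun p => rnk ρ p % m = 0) with hS
    -- cardinality bound
    have hcard : S.card ≤ (η + m - 1) / m := by
      have : ∀ p ∈ S, rnk ρ (p : ℕ) / m ∈ Finset.range ((η + m - 1) / m) := by
        intro p hp
        rcases Finset.mem_filter.mp hp with ⟨hpU, hpm⟩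
        have h1 : rnk ρ (p : ℕ) < η := rnk_lt_of_mem ρ hpU
        have key : η + m - 1 = (η - 1) + m := by omega
        rw [Finset.mem_range, key, Nat.add_div_right _ hm]
        exact Nat.lt_succ_of_le (Nat.div_le_div_right (by omega))
      rw [← Finset.card_range ((η + m - 1) / m)]
      refine Finset.card_le_card_of_injOn (fun p => rnk ρ (p : ℕ) / m) this ?_
      intro p hp p' hp' hdiv
      rcases Finset.mem_filter.mp hp with ⟨hpU, hpm⟩
      rcases Finset.mem_filter.mp hp' with ⟨hpU', hpm'⟩
      apply rnk_inj ρ hpU hpU'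
      have h2 : m * (rnk ρ (p : ℕ) / m) = rnk ρ (p : ℕ) :=
        Nat.mul_div_cancel' (Nat.dvd_of_mod_eq_zero hpm)
      have h2' : m * (rnk ρ (p' : ℕ) / m) = rnk ρ (p' : ℕ) :=
        Nat.mul_div_cancel' (Nat.dvd_of_mod_eq_zero hpm')
      simp only at hdiv
      rw [← h2, ← h2', hdiv]
    -- the all-zeros value is false
    have hval0 : restrictBF (consecOnes m) ρ (fun _ => false) = false := by
      simp only [restrictBF, consecOnes, decide_eq_false_iff_not]
      rintro ⟨s, hs, hall⟩
      have hslt : (s : ℕ) < m ^ 2 := by omega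
      have := (hall ⟨(s : ℕ), hslt⟩).mpr
        ⟨by show (s : ℕ) ≤ (s : ℕ); omega, by show (s : ℕ) < (s : ℕ) + m; omega⟩
      rcases hρ ⟨s, hslt⟩ with h | h <;> simp [h] at this
    -- S is a certificate
    have hcert : IsCert (restrictBF (consecOnes m) ρ) (fun _ => false) S := by
      intro y hy
      rw [hval0]
      simp only [restrictBF, consecOnes, decide_eq_false_iff_not]
      rintro ⟨s, hs, hall⟩
      -- every position in the window is unset and y there is true
      have hwin : ∀ j : Fin (m ^ 2), (s : ℕ) ≤ (j : ℕ) → (j : ℕ) < (s : ℕ) + m →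
          j ∈ U ρ ∧ y j = true := by
        intro j hj1 hj2
        have := (hall j).mpr ⟨hj1, hj2⟩
        rcases hρ j with h | h
        · simp [h] at this
        · exact ⟨Finset.mem_filter.mpr ⟨Finset.mem_univ _, h⟩, by simpa [h] using this⟩
      -- find a window position of rank divisible by m
      set r := rnk ρ (s : ℕ) with hr
      set t := (m - r % m) % m with ht
      have htm : t < m := Nat.mod_lt _ hm
      have hrt : (r + t) % m = 0 := by
        rcases Nat.eq_zero_or_pos (r % m) with h0 | h0
        · have ht0 : t = 0 := by rw [ht, h0, Nat.sub_zero, Nat.mod_self]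
          rw [ht0, Nat.add_zero, h0]
        · have hdiv := Nat.mod_add_div r m
          have h2 : r % m < m := Nat.mod_lt r hm
          have h1 : t = m - r % m := by rw [ht]; exact Nat.mod_eq_of_lt (by omega)
          have h3 : r + t = m * (r / m + 1) := by rw [Nat.mul_add, Nat.mul_one]; omega
          rw [h3, Nat.mul_mod_right]
      have hadd : rnk ρ ((s : ℕ) + t) = r + t := by
        apply rnk_add ρ t (by omega)
        intro j hj1 hj2
        exact (hwin j hj1 (by omega)).1
      have hlt : (s : ℕ) + t < m ^ 2 := by omega
      set p : Fin (m ^ 2) := ⟨(s : ℕ) + t, hlt⟩ with hp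
      have hpwin := hwin p (by show (s : ℕ) ≤ (s : ℕ) + t; omega)
        (by show (s : ℕ) + t < (s : ℕ) + m; omega)
      have hpS : p ∈ S := Finset.mem_filter.mpr ⟨hpwin.1, by
        show rnk ρ ((s : ℕ) + t) % m = 0
        rw [hadd]; exact hrt⟩
      have := hy p hpS
      rw [hpwin.2] at this
      exact Bool.true_eq_false.mp this
    exact le_trans (certAt_le_of_cert _ _ _ hcert) hcard
end

section
/- There exists a Boolean function f on n = k^2 variables (the modified Rubinstein function, k a perfect square) with bs(f) = fbs(f) = C(f) = k^{3/2}, such that for every restriction ρ leaving at most c·k^{3/2} variables unset (for a fixed constant c), C(f|_ρ) = O(k). Consequently bs, fbs, and C cannot be condensed losslessly. -/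
open Finset

/-- Fractional block sensitivity of `f` at `x` (the value of the LP relaxation
of block sensitivity). -/
noncomputable def fbsAt {ι : Type} [Fintype ι] [DecidableEq ι]
    (f : (ι → Bool) → Bool) (x : ι → Bool) : ℝ :=
  sSup {v : ℝ | ∃ y : Finset ι → ℝ,
    (∀ B, 0 ≤ y B) ∧
    (∀ B, f (flipSet x B) = f x → y B = 0) ∧
    (∀ i : ι, (∑ B : Finset ι, if i ∈ B then y B else 0) ≤ 1) ∧
    v = ∑ B : Finset ι, y B}

/-- Fractional block sensitivity of `f`. -/
noncomputable def fbs {ι : Type} [Fintype ι] [DecidableEq ι]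
    (f : (ι → Bool) → Bool) : ℝ :=
  Finset.univ.sup' Finset.univ_nonempty (fbsAt f)

/-!
At the all-zero input, the `m³` blocks of `m` consecutive positions `[t m, t m + m)` inside the
rows are disjoint and sensitive, so `bs ≥ m³`; since `bs ≤ fbs ≤ C` pointwise, it remains to
certify every input with `m³` variables, and every restriction with `O(m²)` of its free variables.

Let `U` be the set of free variables. A `1`-input is certified by one row, costing at most `m²`.
A `0`-input is certified row by row. A row containing a one needs only three positions: its first
one, the position before it, and a position where it deviates from the block of ones starting at
that first one. An all-zero row is certified by its fixed positions together with every `m`-th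
free position, since any run of `m` consecutive free positions contains one of those. So the cost
of a row is at most `3 + |U ∩ row|/m` (and at most `m`), in total `3m² + |U|/m`, which is `O(m²)`
as soon as `|U| = O(m³)`.
-/

open Function

section Measures
variable {ι : Type} {f : (ι → Bool) → Bool} {x : ι → Bool}

lemma certAt_le_card_s9 {S : Finset ι} (hS : IsCert f x S) : certAt f x ≤ S.card :=
  Nat.sInf_le ⟨S, rfl, hS⟩

lemma IsCert.exists_mem_of_sensitive [DecidableEq ι] {S B : Finset ι} (hS : IsCert f x S)
    (hB : f (flipSet x B) ≠ f x) : ∃ i ∈ B, i ∈ S := by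
  by_contra! h
  refine hB (hS _ fun i hi => ?_)
  have hiB : i ∉ B := fun hiB => h i hiB hi
  simp [flipSet, hiB]

variable [Fintype ι]

lemma exists_isCert_card_eq_certAt (f : (ι → Bool) → Bool) (x : ι → Bool) :
    ∃ S : Finset ι, S.card = certAt f x ∧ IsCert f x S :=
  Nat.sInf_mem (s := {c | ∃ S : Finset ι, S.card = c ∧ IsCert f x S})
    ⟨_, univ, rfl, fun y hy => by rw [funext fun i => hy i (mem_univ i)]⟩

variable [DecidableEq ι]

/-- Weak LP duality: a minimum certificate meets every sensitive block, so it is a fractional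
cover of the blocks. -/
lemma sum_le_certAt_of_fractional_packing {y : Finset ι → ℝ} (hpos : ∀ B, 0 ≤ y B)
    (hsens : ∀ B, f (flipSet x B) = f x → y B = 0)
    (hpack : ∀ i, (∑ B : Finset ι, if i ∈ B then y B else 0) ≤ 1) :
    ∑ B : Finset ι, y B ≤ certAt f x := by
  obtain ⟨S, hcard, hS⟩ := exists_isCert_card_eq_certAt f x
  have hcover : ∀ B, y B ≤ ∑ i ∈ S, if i ∈ B then y B else 0 := by
    intro B
    by_cases hB : f (flipSet x B) = f x
    · rw [hsens B hB]
      exact sum_nonneg fun i _ => by split_ifs <;> simp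
    · obtain ⟨i, hiB, hiS⟩ := hS.exists_mem_of_sensitive hB
      calc y B = if i ∈ B then y B else 0 := (if_pos hiB).symm
        _ ≤ _ := single_le_sum (f := fun i => if i ∈ B then y B else 0)
          (fun i _ => by split_ifs <;> simp [hpos B]) hiS
  calc ∑ B : Finset ι, y B
      ≤ ∑ B : Finset ι, ∑ i ∈ S, if i ∈ B then y B else 0 := sum_le_sum fun B _ => hcover B
    _ = ∑ i ∈ S, ∑ B : Finset ι, if i ∈ B then y B else 0 := sum_comm
    _ ≤ ∑ _i ∈ S, (1 : ℝ) := sum_le_sum fun i _ => hpack i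
    _ = certAt f x := by simp [hcard]

lemma fbsAt_le_certAt (f : (ι → Bool) → Bool) (x : ι → Bool) : fbsAt f x ≤ certAt f x :=
  csSup_le ⟨0, fun _ => 0, fun _ => le_rfl, fun _ _ => rfl, fun _ => by simp, by simp⟩
    fun _ ⟨_, hpos, hsens, hpack, hv⟩ => hv ▸ sum_le_certAt_of_fractional_packing hpos hsens hpack

/-- Disjoint sensitive blocks, each with weight one, form a fractional packing. -/
lemma card_le_fbsAt_of_disjoint_blocks {κ : Type} [Fintype κ] (B : κ → Finset ι)
    (hsens : ∀ j, f (flipSet x (B j)) ≠ f x) (hdisj : Pairwise (Disjoint on B)) :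
    (Fintype.card κ : ℝ) ≤ fbsAt f x := by
  set y : Finset ι → ℝ := fun C => ∑ j, if B j = C then 1 else 0
  have hy_mem : ∀ i C, (if i ∈ C then y C else 0) = ∑ j, if B j = C ∧ i ∈ B j then 1 else 0 := by
    intro i C
    split_ifs with hiC
    · exact sum_congr rfl fun j _ => by by_cases h : B j = C <;> simp [h, hiC]
    · exact (sum_eq_zero fun j _ => if_neg fun (h : B j = C ∧ i ∈ B j) => hiC (h.1 ▸ h.2)).symm
  refine le_csSup ⟨certAt f x, fun _ ⟨_, hpos, hsens, hpack, hv⟩ =>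
    hv ▸ sum_le_certAt_of_fractional_packing hpos hsens hpack⟩
    ⟨y, fun C => sum_nonneg fun j _ => by positivity, fun C hC => ?_, fun i => ?_, ?_⟩
  · refine sum_eq_zero fun j _ => if_neg ?_
    rintro rfl
    exact hsens j hC
  · simp only [hy_mem]
    rw [sum_comm]
    have hrow : ∀ j, (∑ C, if B j = C ∧ i ∈ B j then (1 : ℝ) else 0) = if i ∈ B j then 1 else 0 :=
      fun j => by simp [ite_and]
    simp only [hrow, sum_boole, Nat.cast_le_one]
    refine card_le_one.mpr fun j hj j' hj' => ?_
    by_contra hne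
    exact disjoint_left.mp (hdisj hne) (mem_filter.mp hj).2 (mem_filter.mp hj').2
  · simp only [y]
    rw [sum_comm]
    simp [sum_ite_eq]

lemma card_le_certAt_of_disjoint_blocks {κ : Type} [Fintype κ] (B : κ → Finset ι)
    (hsens : ∀ j, f (flipSet x (B j)) ≠ f x) (hdisj : Pairwise (Disjoint on B)) :
    Fintype.card κ ≤ certAt f x := by
  exact_mod_cast (card_le_fbsAt_of_disjoint_blocks B hsens hdisj).trans (fbsAt_le_certAt f x)

lemma bddAbove_bsSet (f : (ι → Bool) → Bool) (x : ι → Bool) :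
    BddAbove {r | ∃ B : Fin r → Finset ι, (∀ j, f (flipSet x (B j)) ≠ f x) ∧
      ∀ j₁ j₂, j₁ ≠ j₂ → Disjoint (B j₁) (B j₂)} :=
  ⟨certAt f x, fun r ⟨B, hsens, hdisj⟩ => by
    simpa using card_le_certAt_of_disjoint_blocks B hsens fun j₁ j₂ => hdisj j₁ j₂⟩

lemma card_le_bsAt_of_disjoint_blocks {κ : Type} [Fintype κ] (B : κ → Finset ι)
    (hsens : ∀ j, f (flipSet x (B j)) ≠ f x) (hdisj : Pairwise (Disjoint on B)) :
    Fintype.card κ ≤ bsAt f x := by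
  set e := (Fintype.equivFin κ).symm
  exact le_csSup (bddAbove_bsSet f x)
    ⟨B ∘ e, fun j => hsens (e j), fun j₁ j₂ hne => hdisj (e.injective.ne hne)⟩

lemma bsAt_le_fbsAt (f : (ι → Bool) → Bool) (x : ι → Bool) : (bsAt f x : ℝ) ≤ fbsAt f x := by
  obtain ⟨B, hsens, hdisj⟩ := Nat.sSup_mem ⟨0, by simp⟩ (bddAbove_bsSet f x)
  have := card_le_fbsAt_of_disjoint_blocks B hsens fun j₁ j₂ => hdisj j₁ j₂
  rwa [Fintype.card_fin] at this

lemma bsAt_le_certAt (f : (ι → Bool) → Bool) (x : ι → Bool) : bsAt f x ≤ certAt f x := by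
  exact_mod_cast (bsAt_le_fbsAt f x).trans (fbsAt_le_certAt f x)

lemma blockSens_eq_fbs_eq_certC {N : ℕ} (hC : ∀ x, certAt f x ≤ N) (x₀ : ι → Bool)
    (hbs : N ≤ bsAt f x₀) : blockSens f = N ∧ fbs f = N ∧ certC f = N := by
  refine ⟨le_antisymm (Finset.sup_le fun x _ => (bsAt_le_certAt f x).trans (hC x))
      (hbs.trans (le_sup (mem_univ x₀))),
    le_antisymm (sup'_le _ _ fun x _ => (fbsAt_le_certAt f x).trans (by exact_mod_cast hC x))
      (le_trans (by exact_mod_cast hbs) ((bsAt_le_fbsAt f x₀).trans (le_sup' _ (mem_univ x₀)))),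
    le_antisymm (Finset.sup_le fun x _ => hC x)
      ((hbs.trans (bsAt_le_certAt f x₀)).trans (le_sup (mem_univ x₀)))⟩

lemma IsCert.restrictBF {ρ : ι → Option Bool} {S : Finset ι}
    (hS : IsCert f (fun i => (ρ i).getD (x i)) S) :
    IsCert (restrictBF f ρ) x (S ∩ univ.filter fun i => ρ i = none) := by
  refine fun y hy => hS _ fun i hi => ?_
  cases hρ : ρ i with
  | none => simpa [hρ] using hy i (by simp [hi, hρ])
  | some b => simp [hρ]

end Measures

lemma Nat.exists_lt_dvd_add (a : ℕ) {m : ℕ} (hm : 0 < m) : ∃ r < m, m ∣ a + r := by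
  by_cases h : a % m = 0
  · exact ⟨0, hm, Nat.dvd_of_mod_eq_zero h⟩
  · refine ⟨m - a % m, by omega, a / m + 1, ?_⟩
    have := Nat.div_add_mod a m
    have := Nat.mod_lt a hm
    rw [Nat.mul_add_one]
    omega

/-- Taking every `m`-th element of `U`, in increasing order, gives a set of density `1/m` in `U`
meeting every run of `m` consecutive elements of `U`. -/
lemma Finset.exists_subset_meets_runs (U : Finset ℕ) {m : ℕ} (hm : 0 < m) :
    ∃ S ⊆ U, m * S.card ≤ U.card ∧ ∀ s, (∀ r < m, s + r ∈ U) → ∃ r < m, s + r ∈ S := by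
  set rank : ℕ → ℕ := fun j => Nat.count (· ∈ U) j + 1
  refine ⟨U.filter fun j => m ∣ rank j, filter_subset _ _, ?_, fun s hrun => ?_⟩
  · have hmaps : Set.MapsTo rank (U.filter fun j => m ∣ rank j)
        ((Ioc 0 U.card).filter (m ∣ ·)) := by
      intro j hj
      obtain ⟨hjU, hdvd⟩ := mem_filter.mp hj
      have : Nat.count (· ∈ U) j < U.card := by simpa using Nat.count_lt_card U.finite_toSet hjU
      simp only [coe_filter, Set.mem_ofPred_eq, mem_Ioc]
      exact ⟨⟨Nat.succ_pos _, this⟩, hdvd⟩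
    have hinj : Set.InjOn rank (U.filter fun j => m ∣ rank j) := fun j hj j' hj' h =>
      Nat.count_injective (mem_filter.mp hj).1 (mem_filter.mp hj').1 (Nat.succ_injective h)
    calc m * (U.filter fun j => m ∣ rank j).card
        ≤ m * ((Ioc 0 U.card).filter (m ∣ ·)).card :=
          Nat.mul_le_mul_left m (card_le_card_of_injOn rank hmaps hinj)
      _ = m * (U.card / m) := by rw [Nat.Ioc_filter_dvd_card_eq_div]
      _ ≤ U.card := Nat.mul_div_le _ _
  · have hrank : ∀ r < m, rank (s + r) = rank s + r := fun r hr => by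
      simp only [rank, Nat.count_add, Nat.count_of_forall fun k hk => hrun k (hk.trans hr)]
      omega
    obtain ⟨r, hr, hdvd⟩ := Nat.exists_lt_dvd_add (rank s) hm
    exact ⟨r, hr, mem_filter.mpr ⟨hrun r hr, hrank r hr ▸ hdvd⟩⟩

section Rows
variable {κ ι : Type} [Fintype ι] {F : (κ × ι → Bool) → Bool} {h : (ι → Bool) → Bool}

lemma Finset.card_eq_sum_card_row [Fintype κ] [DecidableEq κ] [DecidableEq ι]
    (A : Finset (κ × ι)) :
    A.card = ∑ i, (univ.filter fun j => (i, j) ∈ A).card := by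
  simp only [card_filter, ← Fintype.sum_prod_type', Prod.mk.eta]
  rw [sum_boole, Nat.cast_id, filter_mem_eq_inter, univ_inter]

lemma isCert_row_of_eq_true (hF : ∀ x, F x = true ↔ ∃ i, h (fun j => x (i, j)) = true)
    {z : κ × ι → Bool} {i : κ} (hi : h (fun j => z (i, j)) = true) :
    IsCert F z ({i} ×ˢ univ) := by
  intro y hy
  have hrow : (fun j => y (i, j)) = fun j => z (i, j) := funext fun j => hy _ (by simp)
  rw [(hF y).mpr ⟨i, hrow ▸ hi⟩, (hF z).mpr ⟨i, hi⟩]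

lemma isCert_of_forall_row [Fintype κ] [DecidableEq ι]
    (hF : ∀ x, F x = true ↔ ∃ i, h (fun j => x (i, j)) = true)
    {z : κ × ι → Bool} (hz : F z = false) {T : κ → Finset ι}
    (hT : ∀ i, IsCert h (fun j => z (i, j)) (T i)) :
    IsCert F z (univ.filter fun p => p.2 ∈ T p.1) := by
  intro y hy
  rw [hz, Bool.eq_false_iff]
  intro hy1
  obtain ⟨i, hi⟩ := (hF y).mp hy1
  rw [hT i (fun j => y (i, j)) fun j hj => hy (i, j) (by simpa)] at hi
  exact Bool.eq_false_iff.mp hz ((hF z).mpr ⟨i, hi⟩)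

end Rows

section ConsecOnes
variable {m : ℕ}

lemma consecOnes_eq_true_iff {y : Fin (m ^ 2) → Bool} :
    consecOnes m y = true ↔ ∃ s : ℕ, s + m ≤ m ^ 2 ∧
      ∀ j : Fin (m ^ 2), (y j = true ↔ s ≤ j ∧ (j : ℕ) < s + m) := by
  simp only [consecOnes, decide_eq_true_eq]
  exact ⟨fun ⟨s, hs, hy⟩ => ⟨s, hs, hy⟩, fun ⟨s, hs, hy⟩ => ⟨⟨s, by omega⟩, hs, hy⟩⟩

/-- A `0`-input containing a one is certified by its first one `p`, the position before `p`, and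
one position where it differs from the block of ones starting at `p`. -/
lemma consecOnes_exists_isCert_card_le_three {w : Fin (m ^ 2) → Bool}
    (hw : consecOnes m w = false) (hone : ∃ j, w j = true) :
    ∃ T, IsCert (consecOnes m) w T ∧ T.card ≤ 3 := by
  obtain ⟨p, hp, hpmin⟩ := exists_min_image (univ.filter fun j => w j = true) Fin.val
    (by simpa [Finset.Nonempty] using hone)
  replace hp : w p = true := (mem_filter.mp hp).2
  have hpred : (p : ℕ) = 0 ∨ w ⟨p - 1, by omega⟩ = false := by
    by_contra! h
    have := hpmin _ (mem_filter.mpr ⟨mem_univ _, by simpa using h.2⟩)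
    simp only at this
    omega
  obtain ⟨q, hq⟩ : ∃ q : Fin (m ^ 2),
      (p : ℕ) + m ≤ m ^ 2 → ¬(w q = true ↔ p ≤ q ∧ (q : ℕ) < p + m) := by
    by_contra! h
    by_cases hpm : (p : ℕ) + m ≤ m ^ 2
    · exact Bool.false_ne_true (hw ▸ consecOnes_eq_true_iff.mpr ⟨p, hpm, fun j => (h j).2⟩)
    · exact hpm (h p).1
  refine ⟨{p, ⟨p - 1, by omega⟩, q}, fun y hy => ?_, card_le_three⟩
  rw [hw, Bool.eq_false_iff]
  intro hy1
  obtain ⟨s, hs, hwin⟩ := consecOnes_eq_true_iff.mp hy1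
  have hsp := (hwin p).mp ((hy p (by simp)).trans hp)
  have hs_eq : s = p := by
    rcases hpred with h | h
    · omega
    · have := (hwin _).not.mp (Bool.eq_false_iff.mp ((hy _ (by simp)).trans h))
      simp only [not_and, not_lt] at this
      omega
  subst hs_eq
  exact hq hs (by rw [← hy q (by simp)]; exact hwin q)

lemma consecOnes_const_false (hm : 0 < m) : consecOnes m (fun _ => false) = false := by
  rw [Bool.eq_false_iff]
  intro h
  obtain ⟨s, hs, hwin⟩ := consecOnes_eq_true_iff.mp h
  simpa using (hwin ⟨s, by omega⟩).mpr ⟨le_rfl, by simpa⟩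

lemma consecOnes_exists_isCert_zero (hm : 0 < m) (U : Finset (Fin (m ^ 2))) :
    ∃ T, IsCert (consecOnes m) (fun _ => false) T ∧ m * (T ∩ U).card ≤ U.card := by
  obtain ⟨S, -, hS, hmeet⟩ := (U.map Fin.valEmbedding).exists_subset_meets_runs hm
  set T : Finset (Fin (m ^ 2)) := univ.filter fun j => (j : ℕ) ∈ S ∨ j ∉ U
  refine ⟨T, fun y hy => ?_, ?_⟩
  · rw [consecOnes_const_false hm, Bool.eq_false_iff]
    intro hy1
    obtain ⟨s, hs, hwin⟩ := consecOnes_eq_true_iff.mp hy1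
    have hone : ∀ r (hr : r < m), y ⟨s + r, by omega⟩ = true :=
      fun r hr => (hwin _).mpr (by simpa)
    have hzero : ∀ j : Fin (m ^ 2), (j : ℕ) ∈ S ∨ j ∉ U → y j = false :=
      fun j hj => hy j (by simpa [T] using hj)
    have hrun : ∀ r < m, s + r ∈ U.map Fin.valEmbedding := fun r hr => by
      by_contra h
      have hU : (⟨s + r, by omega⟩ : Fin (m ^ 2)) ∉ U := fun hU => h (mem_map.mpr ⟨_, hU, rfl⟩)
      simpa [hone r hr] using hzero _ (Or.inr hU)
    obtain ⟨r, hr, hrS⟩ := hmeet s hrun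
    simpa [hone r hr] using hzero ⟨s + r, by omega⟩ (Or.inl hrS)
  · have hmaps : Set.MapsTo (Fin.val : Fin (m ^ 2) → ℕ) ↑(T ∩ U) ↑S := by
      intro j hj
      simp only [T, coe_inter, coe_filter, Set.mem_inter_iff, Set.mem_ofPred_eq, mem_coe] at hj
      exact hj.1.2.resolve_right (not_not.mpr hj.2)
    calc m * (T ∩ U).card
        ≤ m * S.card :=
          Nat.mul_le_mul_left m (card_le_card_of_injOn _ hmaps Fin.val_injective.injOn)
      _ ≤ U.card := by rwa [card_map] at hS

lemma consecOnes_exists_isCert_inter_card_le (hm : 3 ≤ m) {w : Fin (m ^ 2) → Bool}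
    (hw : consecOnes m w = false) (U : Finset (Fin (m ^ 2))) :
    ∃ T, IsCert (consecOnes m) w T ∧ (T ∩ U).card ≤ m ∧ m * (T ∩ U).card ≤ 3 * m + U.card := by
  by_cases hone : ∃ j, w j = true
  · obtain ⟨T, hT, hcard⟩ := consecOnes_exists_isCert_card_le_three hw hone
    have h3 : (T ∩ U).card ≤ 3 := (card_le_card inter_subset_left).trans hcard
    exact ⟨T, hT, h3.trans hm, (Nat.mul_le_mul_left m h3).trans (by omega)⟩
  · obtain rfl : w = fun _ => false := funext fun j => by simpa using not_exists.mp hone j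
    obtain ⟨T, hT, hcard⟩ := consecOnes_exists_isCert_zero (by omega) U
    have hU : U.card ≤ m * m := by simpa [sq] using card_le_univ U
    exact ⟨T, hT, Nat.le_of_mul_le_mul_left (hcard.trans hU) (by omega), hcard.trans (by omega)⟩

end ConsecOnes

section ModRub
variable {m : ℕ}

lemma modRub_eq_true_iff (x : Fin (m ^ 2) × Fin (m ^ 2) → Bool) :
    modRub m x = true ↔ ∃ i, consecOnes m (fun j => x (i, j)) = true := by
  simp [modRub]

lemma Nat.mul_add_le_mul_of_lt {u v : ℕ} (h : u < v) (m : ℕ) : u * m + m ≤ v * m := by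
  simpa [Nat.succ_mul] using Nat.mul_le_mul_right m h

def modRubBlock (m : ℕ) (a : Fin (m ^ 2) × Fin m) : Finset (Fin (m ^ 2) × Fin (m ^ 2)) :=
  {a.1} ×ˢ univ.filter fun j : Fin (m ^ 2) => a.2 * m ≤ j ∧ (j : ℕ) < a.2 * m + m

lemma modRub_flipSet_modRubBlock (a : Fin (m ^ 2) × Fin m) :
    modRub m (flipSet (fun _ => false) (modRubBlock m a)) = true := by
  refine (modRub_eq_true_iff _).mpr ⟨a.1, consecOnes_eq_true_iff.mpr ⟨a.2 * m, ?_, fun j => ?_⟩⟩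
  · simpa [sq] using Nat.mul_add_le_mul_of_lt a.2.isLt m
  · simp [flipSet, modRubBlock]

lemma pairwise_disjoint_modRubBlock : Pairwise (Disjoint on modRubBlock m) := by
  rintro ⟨a, t⟩ ⟨a', t'⟩ hne
  simp only [onFun, modRubBlock, disjoint_product, disjoint_singleton]
  by_cases ha : a = a'
  · subst ha
    have ht : (t : ℕ) ≠ t' := fun h => hne (by rw [Fin.ext h])
    right
    rw [disjoint_left]
    intro j hj hj'
    simp only [mem_filter, mem_univ, true_and] at hj hj'
    rcases Nat.lt_or_gt_of_ne ht with h | h <;> have := Nat.mul_add_le_mul_of_lt h m <;> omega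
  · exact Or.inl ha

lemma le_bsAt_modRub (hm : 0 < m) : m ^ 2 * m ≤ bsAt (modRub m) (fun _ => false) := by
  have hzero : modRub m (fun _ => false) = false :=
    Bool.eq_false_iff.mpr fun h => by
      obtain ⟨i, hi⟩ := (modRub_eq_true_iff _).mp h
      exact Bool.false_ne_true ((consecOnes_const_false hm).symm.trans hi)
  simpa using card_le_bsAt_of_disjoint_blocks (modRubBlock m)
    (fun a => by rw [modRub_flipSet_modRubBlock, hzero]; decide) pairwise_disjoint_modRubBlock

lemma modRub_exists_isCert (hm : 3 ≤ m) (z : Fin (m ^ 2) × Fin (m ^ 2) → Bool)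
    (U : Finset (Fin (m ^ 2) × Fin (m ^ 2))) :
    ∃ S, IsCert (modRub m) z S ∧ (S ∩ U).card ≤ m ^ 2 * m ∧
      m * (S ∩ U).card ≤ 3 * (m ^ 2 * m) + U.card := by
  by_cases hz : modRub m z = true
  · obtain ⟨i, hi⟩ := (modRub_eq_true_iff z).mp hz
    have hcard : ({i} ×ˢ univ ∩ U).card ≤ m ^ 2 :=
      (card_le_card inter_subset_left).trans (by simp)
    refine ⟨_, isCert_row_of_eq_true modRub_eq_true_iff hi, hcard.trans ?_,
      (Nat.mul_le_mul_left m hcard).trans ?_⟩ <;> nlinarith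
  · replace hz := Bool.eq_false_iff.mpr hz
    have hrow : ∀ i, consecOnes m (fun j => z (i, j)) = false := fun i =>
      Bool.eq_false_iff.mpr fun h => Bool.false_ne_true (hz ▸ (modRub_eq_true_iff z).mpr ⟨i, h⟩)
    choose T hT hTcard hTmul using fun i =>
      consecOnes_exists_isCert_inter_card_le hm (hrow i) (univ.filter fun j => (i, j) ∈ U)
    refine ⟨_, isCert_of_forall_row modRub_eq_true_iff hz hT, ?_⟩
    have hrows : ((univ.filter fun p => p.2 ∈ T p.1) ∩ U).card
        = ∑ i, (T i ∩ univ.filter fun j => (i, j) ∈ U).card := by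
      rw [card_eq_sum_card_row]
      congr! 2 with i
      ext j
      simp
    rw [hrows]
    constructor
    · calc ∑ i, (T i ∩ univ.filter fun j => (i, j) ∈ U).card ≤ ∑ _i : Fin (m ^ 2), m :=
            sum_le_sum fun i _ => hTcard i
        _ = m ^ 2 * m := by simp
    · calc m * ∑ i, (T i ∩ univ.filter fun j => (i, j) ∈ U).card
          ≤ ∑ i, (3 * m + (univ.filter fun j => (i, j) ∈ U).card) := by
            rw [mul_sum]; exact sum_le_sum fun i _ => hTmul i
        _ = 3 * (m ^ 2 * m) + U.card := by
            rw [sum_add_distrib, ← card_eq_sum_card_row]; simp; ring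

lemma modRub_certAt_le (hm : 3 ≤ m) (z : Fin (m ^ 2) × Fin (m ^ 2) → Bool) :
    certAt (modRub m) z ≤ m ^ 2 * m := by
  obtain ⟨S, hS, hcard, -⟩ := modRub_exists_isCert hm z univ
  exact (certAt_le_card_s9 hS).trans (by rwa [inter_univ] at hcard)

lemma modRub_mul_certC_restrictBF_le (hm : 3 ≤ m) (ρ : Fin (m ^ 2) × Fin (m ^ 2) → Option Bool) :
    m * certC (restrictBF (modRub m) ρ) ≤ 3 * (m ^ 2 * m) + unsetCard ρ := by
  obtain ⟨x, -, hx⟩ := exists_mem_eq_sup univ univ_nonempty (certAt (restrictBF (modRub m) ρ))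
  obtain ⟨S, hS, -, hcard⟩ :=
    modRub_exists_isCert hm (fun i => (ρ i).getD (x i)) (univ.filter fun i => ρ i = none)
  rw [certC, hx]
  exact (Nat.mul_le_mul_left m (certAt_le_card_s9 hS.restrictBF)).trans hcard

end ModRub

/-- the modified Rubinstein function `f` on `n = k²` variables
(`k = m²`) has `bs(f) = fbs(f) = C(f) = k^{3/2} = m³`, yet every restriction
leaving at most `c·m³` variables unset has `C(f|_ρ) = O(k) = O(m²)`. Hence
`bs`, `fbs` and `C` cannot be condensed losslessly. -/
theorem modRub_not_losslessly_condensable :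
    ∀ c : ℝ, 0 < c → ∃ C₀ : ℝ, 0 < C₀ ∧ ∀ m : ℕ, 3 ≤ m →
      blockSens (modRub m) = m ^ 2 * m ∧
      fbs (modRub m) = ((m : ℝ) ^ 2 * m) ∧
      certC (modRub m) = m ^ 2 * m ∧
      ∀ ρ : Fin (m ^ 2) × Fin (m ^ 2) → Option Bool,
        (unsetCard ρ : ℝ) ≤ c * ((m : ℝ) ^ 2 * m) →
        (certC (restrictBF (modRub m) ρ) : ℝ) ≤ C₀ * (m : ℝ) ^ 2 := by
  intro c hc
  refine ⟨c + 3, by linarith, fun m hm => ?_⟩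
  obtain ⟨hbs, hfbs, hC⟩ :=
    blockSens_eq_fbs_eq_certC (modRub_certAt_le hm) _ (le_bsAt_modRub (by omega))
  refine ⟨hbs, by rw [hfbs]; push_cast; ring, hC, fun ρ hρ => ?_⟩
  have hm0 : (0 : ℝ) < m := Nat.cast_pos.mpr (by omega)
  have hmul : (m : ℝ) * certC (restrictBF (modRub m) ρ) ≤ 3 * (m ^ 2 * m) + unsetCard ρ := by
    exact_mod_cast modRub_mul_certC_restrictBF_le hm ρ
  refine le_of_mul_le_mul_left ?_ hm0
  nlinarith
end

section
/- For every Boolean function f: {0,1}^n → {0,1} and every positive integer k ≤ deg(f), there exists a restriction ρ with exactly k unset variables such that deg(f|_ρ) = k, where deg denotes the degree of the unique multilinear real polynomial representing the function. -/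
open Finset

/-- The degree of a Boolean function: the least possible total degree of a real
polynomial representing it on `{0,1}^ι` (this equals the degree of the unique
multilinear representing polynomial). -/
noncomputable def polyDeg {ι : Type} [Fintype ι] [DecidableEq ι]
    (f : (ι → Bool) → Bool) : ℕ :=
  sInf {d | ∃ p : MvPolynomial ι ℝ, p.totalDegree ≤ d ∧
    ∀ x, MvPolynomial.eval (fun i => if x i then (1 : ℝ) else 0) p =
      (if f x then 1 else 0)}


section Aux
set_option linter.unusedSectionVars false
variable {ι : Type} [Fintype ι] [DecidableEq ι]

lemma sum_pow_neg_one_real (A : Finset ι) :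
    (∑ m ∈ A.powerset, (-1 : ℝ) ^ m.card) = if A = ∅ then 1 else 0 := by
  have h := Finset.sum_powerset_neg_one_pow_card (x := A)
  have : ((∑ m ∈ A.powerset, (-1 : ℤ) ^ m.card : ℤ) : ℝ)
      = ∑ m ∈ A.powerset, (-1 : ℝ) ^ m.card := by push_cast; rfl
  rw [← this, h]; split <;> norm_num

/-- Key alternating-sum lemma. -/
lemma alt_sum (S U : Finset ι) (hUS : U ⊆ S) :
    ∑ T ∈ S.powerset, (if U ⊆ T then (-1:ℝ)^(S.card - T.card) else 0)
      = if U = S then 1 else 0 := by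
  rw [← Finset.sum_filter]
  have hbij : ∑ T ∈ S.powerset.filter (fun T => U ⊆ T), (-1:ℝ)^(S.card - T.card)
      = ∑ R ∈ (S \ U).powerset, (-1:ℝ)^(S.card - (U ∪ R).card) := by
    refine Finset.sum_nbij' (fun T => T \ U) (fun R => U ∪ R) ?_ ?_ ?_ ?_ ?_
    · intro T hT
      simp only [mem_powerset, mem_filter] at *
      exact sdiff_subset_sdiff hT.1 (le_refl U)
    · intro R hR
      simp only [mem_powerset, mem_filter] at *
      exact ⟨union_subset hUS (hR.trans sdiff_subset), subset_union_left⟩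
    · intro T hT
      simp only [mem_powerset, mem_filter] at hT
      exact union_sdiff_of_subset hT.2
    · intro R hR
      simp only [mem_powerset] at hR
      show (U ∪ R) \ U = R
      rw [union_sdiff_cancel_left (disjoint_of_subset_right hR sdiff_disjoint.symm)]
    · intro T hT
      simp only [mem_powerset, mem_filter] at hT
      congr 2
      rw [union_sdiff_of_subset hT.2]
  rw [hbij]
  have hcard : ∀ R ∈ (S \ U).powerset, (-1:ℝ)^(S.card - (U ∪ R).card)
      = (-1:ℝ)^((S\U).card) * (-1:ℝ)^R.card := by
    intro R hR
    rw [mem_powerset] at hR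
    have hdisj : Disjoint U R := disjoint_of_subset_right hR sdiff_disjoint.symm
    have h1 : (U ∪ R).card = U.card + R.card := card_union_of_disjoint hdisj
    have h2 : (S\U).card = S.card - U.card := card_sdiff_of_subset hUS
    have hRle : R.card ≤ (S\U).card := card_le_card hR
    have hUle : U.card ≤ S.card := card_le_card hUS
    have h3 : S.card - (U ∪ R).card + R.card = (S\U).card := by omega
    have := pow_add (-1:ℝ) (S.card - (U ∪ R).card) R.card
    rw [h3] at this
    have hsq : (-1:ℝ)^R.card * (-1:ℝ)^R.card = 1 := by
      rw [← pow_add]; exact Even.neg_one_pow (Even.add_self _)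
    calc (-1:ℝ)^(S.card - (U ∪ R).card)
        = (-1:ℝ)^(S.card - (U ∪ R).card) * ((-1:ℝ)^R.card * (-1:ℝ)^R.card) := by rw [hsq, mul_one]
      _ = (-1:ℝ)^((S\U).card) * (-1:ℝ)^R.card := by rw [← mul_assoc, this]
  rw [Finset.sum_congr rfl hcard, ← Finset.mul_sum, sum_pow_neg_one_real]
  have hiff : (S \ U = ∅) ↔ U = S := by
    constructor
    · intro h
      exact Finset.Subset.antisymm hUS (by rwa [← sdiff_eq_empty_iff_subset])
    · intro h; subst h; simp
  by_cases h : U = S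
  · rw [if_pos (hiff.2 h), if_pos h, hiff.2 h]; simp
  · rw [if_neg (fun he => h (hiff.1 he)), if_neg h]; ring

end Aux
section Mob
set_option linter.unusedSectionVars false
variable {ι : Type} [Fintype ι] [DecidableEq ι]

def indF (T : Finset ι) : ι → Bool := fun i => decide (i ∈ T)

noncomputable def f01 (f : (ι → Bool) → Bool) (x : ι → Bool) : ℝ := if f x then 1 else 0

noncomputable def mob (f : (ι → Bool) → Bool) (S : Finset ι) : ℝ :=
  ∑ T ∈ S.powerset, (-1:ℝ)^(S.card - T.card) * f01 f (indF T)

lemma prodInd (W R : Finset ι) :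
    ∏ i ∈ W, (if indF R i then (1:ℝ) else 0) = if W ⊆ R then 1 else 0 := by
  have : ∀ i, (if indF R i then (1:ℝ) else 0) = if i ∈ R then 1 else 0 := by
    intro i; simp [indF]
  simp only [this]
  rw [Finset.prod_boole]
  by_cases h : W ⊆ R
  · rw [if_pos h, if_pos (fun i hi => h hi)]
  · rw [if_neg h, if_neg (fun hall => h (fun i hi => hall i hi))]

/-- variant of `alt_sum` with the exponent measured from below -/
lemma alt_sum' (S U : Finset ι) (hUS : U ⊆ S) :
    ∑ T ∈ S.powerset, (if U ⊆ T then (-1:ℝ)^(T.card - U.card) else 0)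
      = if U = S then 1 else 0 := by
  have key : ∀ T ∈ S.powerset, (if U ⊆ T then (-1:ℝ)^(T.card - U.card) else 0)
      = (-1:ℝ)^(S.card - U.card) * (if U ⊆ T then (-1:ℝ)^(S.card - T.card) else 0) := by
    intro T hT
    rw [mem_powerset] at hT
    by_cases hU : U ⊆ T
    · rw [if_pos hU, if_pos hU]
      have h1 : U.card ≤ T.card := card_le_card hU
      have h2 : T.card ≤ S.card := card_le_card hT
      have h3 : (S.card - U.card) = (S.card - T.card) + (T.card - U.card) := by omega
      rw [h3, pow_add]
      have hsq : (-1:ℝ)^(S.card - T.card) * (-1:ℝ)^(S.card - T.card) = 1 := by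
        rw [← pow_add]; exact Even.neg_one_pow (Even.add_self _)
      linear_combination (-(-1:ℝ)^(T.card - U.card)) * hsq
    · rw [if_neg hU, if_neg hU, mul_zero]
  rw [Finset.sum_congr rfl key, ← Finset.mul_sum, alt_sum S U hUS]
  by_cases h : U = S
  · subst h; simp
  · rw [if_neg h, mul_zero]

/-- Möbius inversion: the multilinear polynomial with coefficients `mob f`
represents `f` on the Boolean cube. -/
lemma mob_inversion (f : (ι → Bool) → Bool) (x : ι → Bool) :
    ∑ S ∈ (univ : Finset ι).powerset, mob f S * ∏ i ∈ S, (if x i then (1:ℝ) else 0)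
      = f01 f x := by
  set Tx : Finset ι := univ.filter (fun i => x i = true) with hTx
  have hx : x = indF Tx := by
    funext i; simp [indF, hTx]
  rw [hx]
  have h1 : ∀ S ∈ (univ : Finset ι).powerset,
      mob f S * ∏ i ∈ S, (if indF Tx i then (1:ℝ) else 0)
      = if S ⊆ Tx then mob f S else 0 := by
    intro S _
    rw [prodInd]
    by_cases h : S ⊆ Tx <;> simp [h]
  have h1' : ∀ S ∈ (univ : Finset ι).powerset,
      mob f S * ∏ i ∈ S, (if indF Tx i then (1:ℝ) else 0)
      = if S ∈ Tx.powerset then mob f S else 0 := by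
    intro S hS; rw [h1 S hS]; simp [mem_powerset]
  rw [Finset.sum_congr rfl h1', Finset.sum_ite_mem]
  have h2 : (univ : Finset ι).powerset ∩ Tx.powerset = Tx.powerset := by
    apply Finset.inter_eq_right.2
    intro S _; simp
  rw [h2]
  have h3 : ∀ S ∈ Tx.powerset, mob f S
      = ∑ T ∈ Tx.powerset, (if T ⊆ S then (-1:ℝ)^(S.card - T.card) * f01 f (indF T) else 0) := by
    intro S hS
    rw [mem_powerset] at hS
    rw [← Finset.sum_filter]
    have : Tx.powerset.filter (fun T => T ⊆ S) = S.powerset := by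
      ext T
      simp only [mem_filter, mem_powerset]
      exact ⟨fun h => h.2, fun h => ⟨h.trans hS, h⟩⟩
    rw [this, mob]
  rw [Finset.sum_congr rfl h3, Finset.sum_comm]
  have h4 : ∀ T ∈ Tx.powerset,
      ∑ S ∈ Tx.powerset, (if T ⊆ S then (-1:ℝ)^(S.card - T.card) * f01 f (indF T) else 0)
      = (if T = Tx then 1 else 0) * f01 f (indF T) := by
    intro T hT
    rw [mem_powerset] at hT
    have : ∀ S ∈ Tx.powerset,
        (if T ⊆ S then (-1:ℝ)^(S.card - T.card) * f01 f (indF T) else 0)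
        = (if T ⊆ S then (-1:ℝ)^(S.card - T.card) else 0) * f01 f (indF T) := by
      intro S _; split <;> simp
    rw [Finset.sum_congr rfl this, ← Finset.sum_mul, alt_sum' Tx T hT]
  rw [Finset.sum_congr rfl h4]
  simp [Finset.sum_ite_eq', Finset.mem_powerset]

end Mob
section Deg
set_option linter.unusedSectionVars false
variable {ι : Type} [Fintype ι] [DecidableEq ι]

lemma eval_at_ind (p : MvPolynomial ι ℝ) (T : Finset ι) :
    MvPolynomial.eval (fun i => if indF T i then (1:ℝ) else 0) p
      = ∑ d ∈ p.support, p.coeff d * (if d.support ⊆ T then 1 else 0) := by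
  rw [MvPolynomial.eval_eq]
  refine Finset.sum_congr rfl fun d _ => ?_
  congr 1
  have : ∀ i ∈ d.support, ((if indF T i then (1:ℝ) else 0)) ^ d i
      = if indF T i then 1 else 0 := by
    intro i hi
    have hd : d i ≠ 0 := Finsupp.mem_support_iff.1 hi
    by_cases h : indF T i
    · simp [h]
    · simp [h, zero_pow hd]
  rw [Finset.prod_congr rfl this, prodInd]

lemma mob_eq_zero_of_totalDegree_lt (f : (ι → Bool) → Bool) (p : MvPolynomial ι ℝ)
    (hp : ∀ x, MvPolynomial.eval (fun i => if x i then (1:ℝ) else 0) p = f01 f x)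
    (S : Finset ι) (hS : p.totalDegree < S.card) : mob f S = 0 := by
  have h1 : mob f S = ∑ T ∈ S.powerset, (-1:ℝ)^(S.card - T.card)
      * ∑ d ∈ p.support, p.coeff d * (if d.support ⊆ T then 1 else 0) := by
    refine Finset.sum_congr rfl fun T _ => ?_
    rw [← eval_at_ind, hp]
  rw [h1]
  have h2 : ∀ T ∈ S.powerset, (-1:ℝ)^(S.card - T.card)
      * ∑ d ∈ p.support, p.coeff d * (if d.support ⊆ T then 1 else 0)
      = ∑ d ∈ p.support, p.coeff d * (if d.support ⊆ T then (-1:ℝ)^(S.card - T.card) else 0) := by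
    intro T _
    rw [Finset.mul_sum]
    refine Finset.sum_congr rfl fun d _ => ?_
    split <;> ring
  rw [Finset.sum_congr rfl h2, Finset.sum_comm]
  refine Finset.sum_eq_zero fun d hd => ?_
  have hcard : d.support.card ≤ p.totalDegree := by
    refine le_trans ?_ (MvPolynomial.le_totalDegree hd)
    rw [Finsupp.sum]
    calc d.support.card = ∑ _i ∈ d.support, 1 := by simp
      _ ≤ ∑ i ∈ d.support, d i :=
        Finset.sum_le_sum fun i hi => Nat.one_le_iff_ne_zero.2 (Finsupp.mem_support_iff.1 hi)
  by_cases hsub : d.support ⊆ S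
  · rw [← Finset.mul_sum, alt_sum S d.support hsub]
    have : d.support ≠ S := fun h => by rw [h] at hcard; omega
    rw [if_neg this, mul_zero]
  · have : ∀ T ∈ S.powerset, (if d.support ⊆ T then (-1:ℝ)^(S.card - T.card) else 0) = 0 := by
      intro T hT
      rw [mem_powerset] at hT
      exact if_neg fun h => hsub (h.trans hT)
    rw [← Finset.mul_sum, Finset.sum_congr rfl this, Finset.sum_const_zero, mul_zero]

noncomputable def degM (f : (ι → Bool) → Bool) : ℕ :=
  ((univ : Finset ι).powerset.filter (fun S => mob f S ≠ 0)).sup Finset.card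

/-- the canonical multilinear polynomial -/
noncomputable def mlp (f : (ι → Bool) → Bool) : MvPolynomial ι ℝ :=
  ∑ S ∈ (univ : Finset ι).powerset, MvPolynomial.C (mob f S) * ∏ i ∈ S, MvPolynomial.X i

lemma mlp_eval (f : (ι → Bool) → Bool) (x : ι → Bool) :
    MvPolynomial.eval (fun i => if x i then (1:ℝ) else 0) (mlp f) = f01 f x := by
  rw [mlp, map_sum, ← mob_inversion f x]
  refine Finset.sum_congr rfl fun S _ => ?_
  rw [map_mul, MvPolynomial.eval_C, map_prod]
  simp [MvPolynomial.eval_X]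

lemma mlp_totalDegree (f : (ι → Bool) → Bool) : (mlp f).totalDegree ≤ degM f := by
  refine le_trans (MvPolynomial.totalDegree_finset_sum _ _) (Finset.sup_le fun S hS => ?_)
  by_cases h : mob f S = 0
  · simp [h]
  · refine le_trans (MvPolynomial.totalDegree_mul _ _) ?_
    rw [MvPolynomial.totalDegree_C, zero_add]
    refine le_trans (MvPolynomial.totalDegree_finset_prod _ _) ?_
    calc ∑ i ∈ S, (MvPolynomial.X i : MvPolynomial ι ℝ).totalDegree
        = ∑ _i ∈ S, 1 := by simp [MvPolynomial.totalDegree_X]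
      _ = S.card := by simp
      _ ≤ degM f := Finset.le_sup (by simp [mem_filter, h])
lemma polyDeg_eq_degM (f : (ι → Bool) → Bool) : polyDeg f = degM f := by
  have hmem : degM f ∈ {d | ∃ p : MvPolynomial ι ℝ, p.totalDegree ≤ d ∧
      ∀ x, MvPolynomial.eval (fun i => if x i then (1 : ℝ) else 0) p =
        (if f x then 1 else 0)} :=
    ⟨mlp f, mlp_totalDegree f, fun x => mlp_eval f x⟩
  have hle : polyDeg f ≤ degM f := Nat.sInf_le hmem
  have hge : degM f ≤ polyDeg f := by
    obtain ⟨p, hpd, hpe⟩ := Nat.sInf_mem (⟨degM f, hmem⟩ : Set.Nonempty _)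
    refine Finset.sup_le fun S hS => ?_
    rw [mem_filter] at hS
    by_contra hlt
    push_neg at hlt
    exact hS.2 (mob_eq_zero_of_totalDegree_lt f p hpe S (lt_of_le_of_lt hpd hlt))
  omega

lemma mob_eq_zero_of_junta (g : (ι → Bool) → Bool) (K : Finset ι)
    (hg : ∀ x y : ι → Bool, (∀ i ∈ K, x i = y i) → g x = g y)
    (S : Finset ι) (hS : ¬ S ⊆ K) : mob g S = 0 := by
  obtain ⟨j, hjS, hjK⟩ := Finset.not_subset.1 hS
  have hjS' : j ∉ S.erase j := Finset.notMem_erase j S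
  have hins : insert j (S.erase j) = S := Finset.insert_erase hjS
  have hps : S.powerset = (insert j (S.erase j)).powerset := by rw [hins]
  rw [mob, hps, Finset.sum_powerset_insert hjS', ← Finset.sum_add_distrib]
  refine Finset.sum_eq_zero fun T hT => ?_
  rw [mem_powerset] at hT
  have hjT : j ∉ T := fun h => hjS' (hT h)
  have hcT : (insert j T).card = T.card + 1 := Finset.card_insert_of_notMem hjT
  have hval : g (indF (insert j T)) = g (indF T) := by
    refine hg _ _ fun i hi => ?_
    have hne : i ≠ j := fun h => hjK (h ▸ hi)
    simp [indF, Finset.mem_insert, hne]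
  have hf : f01 g (indF (insert j T)) = f01 g (indF T) := by rw [f01, f01, hval]
  have hsub2 : insert j T ⊆ S := Finset.insert_subset hjS (hT.trans (Finset.erase_subset _ _))
  have hle : T.card + 1 ≤ S.card := hcT ▸ Finset.card_le_card hsub2
  rw [hf, hcT]
  have hexp : S.card - T.card = (S.card - (T.card + 1)) + 1 := by omega
  rw [hexp, pow_succ]
  ring

end Deg

theorem deg_condenses' (n : ℕ) (f : (Fin n → Bool) → Bool)
    (k : ℕ) (hk1 : 1 ≤ k) (hk : k ≤ polyDeg f) :
    ∃ ρ : Fin n → Option Bool, unsetCard ρ = k ∧ polyDeg (restrictBF f ρ) = k := by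
  classical
  rw [polyDeg_eq_degM, degM] at hk
  obtain ⟨S1, hS1mem, hS1k⟩ := (Finset.le_sup_iff (show (⊥:ℕ) < k from hk1)).1 hk
  rw [mem_filter] at hS1mem
  set A : Finset (Finset (Fin n)) :=
    univ.powerset.filter (fun S => mob f S ≠ 0 ∧ k ≤ S.card) with hA
  have hS1A : S1 ∈ A := by rw [hA, mem_filter]; exact ⟨hS1mem.1, hS1mem.2, hS1k⟩
  obtain ⟨S0, hS0A, hS0min⟩ := Finset.exists_min_image A Finset.card ⟨S1, hS1A⟩
  rw [hA, mem_filter] at hS0A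
  obtain ⟨-, hmob0, hkd⟩ := hS0A
  obtain ⟨K, hKS0, hKcard⟩ := Finset.exists_subset_card_eq hkd
  set ρ : Fin n → Option Bool :=
    fun i => if i ∈ K then none else if i ∈ S0 then some true else some false with hρ
  refine ⟨ρ, ?_, ?_⟩
  · rw [unsetCard]
    have hfil : (univ.filter fun i => ρ i = none) = K := by
      ext i
      by_cases h1 : i ∈ K
      · simp [hρ, h1]
      · by_cases h2 : i ∈ S0 <;> simp [hρ, h1, h2]
    rw [hfil, hKcard]
  · rw [polyDeg_eq_degM]
    have hjunta : ∀ x y : Fin n → Bool, (∀ i ∈ K, x i = y i) →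
        restrictBF f ρ x = restrictBF f ρ y := by
      intro x y hxy
      show f _ = f _
      congr 1
      funext i
      by_cases h1 : i ∈ K
      · simp [hρ, h1, hxy i h1]
      · by_cases h2 : i ∈ S0 <;> simp [hρ, h1, h2]
    have hub : degM (restrictBF f ρ) ≤ k := by
      refine Finset.sup_le fun S hS => ?_
      rw [mem_filter] at hS
      by_contra h
      push_neg at h
      have hnsub : ¬ S ⊆ K := fun hsub => by
        have := Finset.card_le_card hsub; omega
      exact hS.2 (mob_eq_zero_of_junta _ K hjunta S hnsub)
    have hgT : ∀ T ∈ K.powerset,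
        f01 (restrictBF f ρ) (indF T) = f01 f (indF (T ∪ (S0 \ K))) := by
      intro T hT
      rw [mem_powerset] at hT
      have hval : restrictBF f ρ (indF T) = f (indF (T ∪ (S0 \ K))) := by
        show f _ = f _
        congr 1
        funext i
        by_cases h1 : i ∈ K
        · simp [hρ, indF, restrictBF, h1, Finset.mem_union, Finset.mem_sdiff]
        · have hiT : i ∉ T := fun h => h1 (hT h)
          by_cases h2 : i ∈ S0 <;>
            simp [hρ, indF, restrictBF, h1, h2, hiT, Finset.mem_union, Finset.mem_sdiff]
      rw [f01, f01, hval]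
    have hmobK : mob (restrictBF f ρ) K = mob f S0 := by
      rw [mob, Finset.sum_congr rfl (fun T hT => by rw [hgT T hT])]
      have e2 : ∀ T ∈ K.powerset, f01 f (indF (T ∪ (S0 \ K)))
          = ∑ W ∈ (univ : Finset (Fin n)).powerset,
              mob f W * (if W ⊆ T ∪ (S0 \ K) then 1 else 0) := by
        intro T _
        rw [← mob_inversion f (indF (T ∪ (S0 \ K)))]
        exact Finset.sum_congr rfl fun W _ => by rw [prodInd]
      rw [Finset.sum_congr rfl (fun T hT => by rw [e2 T hT])]
      have e3 : ∀ T ∈ K.powerset, (-1:ℝ)^(K.card - T.card) *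
          ∑ W ∈ (univ : Finset (Fin n)).powerset,
            mob f W * (if W ⊆ T ∪ (S0 \ K) then 1 else 0)
          = ∑ W ∈ (univ : Finset (Fin n)).powerset,
            mob f W * (if W ⊆ T ∪ (S0 \ K) then (-1:ℝ)^(K.card - T.card) else 0) := by
        intro T _
        rw [Finset.mul_sum]
        exact Finset.sum_congr rfl fun W _ => by split <;> ring
      rw [Finset.sum_congr rfl e3, Finset.sum_comm]
      have e4 : ∀ W ∈ (univ : Finset (Fin n)).powerset,
          ∑ T ∈ K.powerset, mob f W * (if W ⊆ T ∪ (S0 \ K) then (-1:ℝ)^(K.card - T.card) else 0)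
          = mob f W * (if K ⊆ W ∧ W ⊆ S0 then 1 else 0) := by
        intro W _
        rw [← Finset.mul_sum]
        congr 1
        by_cases hWS0 : W ⊆ S0
        · have hcond : ∀ T ∈ K.powerset, (W ⊆ T ∪ (S0 \ K)) ↔ (W ∩ K ⊆ T) := by
            intro T hT
            rw [mem_powerset] at hT
            constructor
            · intro h i hi
              rw [Finset.mem_inter] at hi
              rcases Finset.mem_union.1 (h hi.1) with h' | h'
              · exact h'
              · exact absurd hi.2 (Finset.mem_sdiff.1 h').2
            · intro h i hi
              by_cases hiK : i ∈ K
              · exact Finset.mem_union.2 (Or.inl (h (Finset.mem_inter.2 ⟨hi, hiK⟩)))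
              · exact Finset.mem_union.2 (Or.inr (Finset.mem_sdiff.2 ⟨hWS0 hi, hiK⟩))
          have hrw : ∀ T ∈ K.powerset, (if W ⊆ T ∪ (S0 \ K) then (-1:ℝ)^(K.card - T.card) else 0)
              = (if W ∩ K ⊆ T then (-1:ℝ)^(K.card - T.card) else 0) := by
            intro T hT
            by_cases h : W ∩ K ⊆ T
            · rw [if_pos ((hcond T hT).2 h), if_pos h]
            · rw [if_neg (fun hh => h ((hcond T hT).1 hh)), if_neg h]
          rw [Finset.sum_congr rfl hrw, alt_sum K (W ∩ K) Finset.inter_subset_right]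
          refine if_congr ?_ rfl rfl
          constructor
          · intro h
            exact ⟨Finset.inter_eq_right.1 h, hWS0⟩
          · intro h
            exact Finset.inter_eq_right.2 h.1
        · obtain ⟨w, hwW, hwS0⟩ := Finset.not_subset.1 hWS0
          have hz : ∀ T ∈ K.powerset,
              (if W ⊆ T ∪ (S0 \ K) then (-1:ℝ)^(K.card - T.card) else 0) = 0 := by
            intro T hT
            rw [mem_powerset] at hT
            refine if_neg fun h => ?_
            rcases Finset.mem_union.1 (h hwW) with h' | h'
            · exact hwS0 (hKS0 (hT h'))
            · exact hwS0 (Finset.mem_sdiff.1 h').1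
          rw [Finset.sum_congr rfl hz, Finset.sum_const_zero,
            if_neg (fun hc => hwS0 (hc.2 hwW))]
      rw [Finset.sum_congr rfl e4]
      have e5 : ∀ W ∈ (univ : Finset (Fin n)).powerset,
          mob f W * (if K ⊆ W ∧ W ⊆ S0 then 1 else 0)
          = if W = S0 then mob f S0 else 0 := by
        intro W _
        by_cases hW : W = S0
        · subst hW
          rw [if_pos ⟨hKS0, Finset.Subset.refl _⟩, if_pos rfl, mul_one]
        · rw [if_neg hW]
          by_cases hc : K ⊆ W ∧ W ⊆ S0
          · have hWcard : W.card < S0.card :=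
              lt_of_le_of_ne (Finset.card_le_card hc.2)
                (fun h => hW (Finset.eq_of_subset_of_card_le hc.2 (le_of_eq h.symm)))
            have hmobW : mob f W = 0 := by
              by_contra hnz
              have hWA : W ∈ A := mem_filter.2 ⟨mem_powerset.2 (subset_univ W), hnz,
                hKcard ▸ Finset.card_le_card hc.1⟩
              have := hS0min W hWA
              omega
            rw [hmobW, zero_mul]
          · rw [if_neg hc, mul_zero]
      rw [Finset.sum_congr rfl e5, Finset.sum_ite_eq' _ S0,
        if_pos (mem_powerset.2 (subset_univ S0))]
    have hlb : k ≤ degM (restrictBF f ρ) := by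
      rw [← hKcard]
      exact Finset.le_sup (mem_filter.2 ⟨mem_powerset.2 (subset_univ K),
        by rw [hmobK]; exact hmob0⟩)
    omega

/-- degree condenses losslessly (and to any smaller value): for
every `f` and `1 ≤ k ≤ deg(f)` there is a restriction with exactly `k` unset
variables with `deg(f|_ρ) = k`. -/
theorem deg_condenses (n : ℕ) (f : (Fin n → Bool) → Bool)
    (k : ℕ) (hk1 : 1 ≤ k) (hk : k ≤ polyDeg f) :
    ∃ ρ : Fin n → Option Bool, unsetCard ρ = k ∧ polyDeg (restrictBF f ρ) = k := by
  exact deg_condenses' n f k hk1 hk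
end
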